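/- arXiv:2105.09732 — 5 statements merged into one kernel-verified Lean document; each statement's English description precedes it below -/
import Mathlib

section
/- Let L(k⁻,k⁺) = k⁺ - ⌊(k⁻+k⁺)²/(8k⁻)⌋ for positive integers k⁻, k⁺ with k⁺ > k⁻ > k⁺/3. Then |k⁺ + k⁻ - ⌈√(8 k⁻ (k⁺ - L(k⁻,k⁺)))⌉| ≤ 4. -/
/-- For positive integers `k⁻ < k⁺ < 3k⁻`, with
`L(k⁻,k⁺) = k⁺ - ⌊(k⁻+k⁺)²/(8k⁻)⌋`, one has
`|k⁺ + k⁻ - ⌈√(8 k⁻ (k⁺ - L(k⁻,k⁺)))⌉| ≤ 4`. -/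
theorem stmt_2 (km kp : ℤ) (hkm : 0 < km) (hkp : 0 < kp)
    (h1 : km < kp) (h2 : kp < 3 * km) :
    |kp + km -
        ⌈Real.sqrt (8 * (km : ℝ) *
          ((kp : ℝ) - ((kp - ⌊((km : ℚ) + kp) ^ 2 / (8 * km)⌋ : ℤ) : ℝ)))⌉| ≤ 4 := by
  set M : ℤ := ⌊((km : ℚ) + kp) ^ 2 / (8 * km)⌋ with hMdef
  have h8 : (0 : ℚ) < 8 * km := by positivity
  have hA : 8 * km * M ≤ (km + kp) ^ 2 := by
    have h := Int.floor_le (((km : ℚ) + kp) ^ 2 / (8 * km))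
    rw [le_div_iff₀ h8] at h
    have h' : ((8 * km * M : ℤ) : ℚ) ≤ (((km + kp) ^ 2 : ℤ) : ℚ) := by push_cast; linarith
    exact_mod_cast h'
  have hB : (km + kp) ^ 2 < 8 * km * (M + 1) := by
    have h := Int.lt_floor_add_one (((km : ℚ) + kp) ^ 2 / (8 * km))
    rw [div_lt_iff₀ h8] at h
    have h' : ((((km + kp) ^ 2 : ℤ)) : ℚ) < ((8 * km * (M + 1) : ℤ) : ℚ) := by push_cast; linarith
    exact_mod_cast h'
  have hMnn : 0 ≤ M := by nlinarith [sq_nonneg (km + kp)]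
  have harg : (8 * (km : ℝ) * ((kp : ℝ) - ((kp - M : ℤ) : ℝ))) = ((8 * km * M : ℤ) : ℝ) := by
    push_cast; ring
  rw [harg]
  set c := ⌈Real.sqrt ((8 * km * M : ℤ) : ℝ)⌉ with hc
  have hle : Real.sqrt ((8 * km * M : ℤ) : ℝ) ≤ ((km + kp : ℤ) : ℝ) := by
    rw [show ((km + kp : ℤ) : ℝ) = Real.sqrt (((km + kp : ℤ) : ℝ) ^ 2) from
      (Real.sqrt_sq (by exact_mod_cast by omega)).symm]
    apply Real.sqrt_le_sqrt
    exact_mod_cast by push_cast; exact_mod_cast hA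
  have hcle : c ≤ km + kp := Int.ceil_le.mpr hle
  have hc0 : 0 ≤ c := Int.ceil_nonneg (Real.sqrt_nonneg _)
  rw [abs_le]
  by_cases hbig : 8 * km ≤ 10 * (km + kp) - 25
  · have hsq : ((km + kp - 5 : ℤ) : ℝ) < Real.sqrt ((8 * km * M : ℤ) : ℝ) := by
      rcases le_or_gt 0 (km + kp - 5) with h5 | h5
      · rw [show Real.sqrt ((8 * km * M : ℤ) : ℝ) = Real.sqrt ((8 * km * M : ℤ) : ℝ) from rfl]
        have hlt : (km + kp - 5) ^ 2 < 8 * km * M := by nlinarith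
        have h5' : (0 : ℝ) ≤ ((km + kp - 5 : ℤ) : ℝ) := by exact_mod_cast h5
        rw [Real.lt_sqrt h5']
        exact_mod_cast by push_cast; exact_mod_cast hlt
      · calc ((km + kp - 5 : ℤ) : ℝ) < 0 := by exact_mod_cast h5
          _ ≤ _ := Real.sqrt_nonneg _
    have hlt : km + kp - 5 < c := by
      have h1 := Int.le_ceil (Real.sqrt ((8 * km * M : ℤ) : ℝ))
      have : ((km + kp - 5 : ℤ) : ℝ) < (c : ℝ) := lt_of_lt_of_le hsq h1
      exact_mod_cast this
    omega
  · have : km = 1 ∧ kp = 2 := by omega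
    omega
end

section
/- Define harmonic partial sums R(p,q) = Σ_{j=p}^{q} 1/j for integers 0 < p ≤ q. For integer pairs (k⁻,k⁺) with k⁺ > k⁻ > k⁺/3 > 0 and L(k⁻,k⁺) = k⁺ - ⌊(k⁻+k⁺)²/(8k⁻)⌋, the quantity R(k⁻, ⌊(k⁺+k⁻)/2⌋) + R(k⁺ - L(k⁻,k⁺), ⌈(k⁺+k⁻)/2⌉) converges to log 2 as k⁻ → ∞ (along any sequence of admissible pairs with k⁻ → ∞). -/
open Filter Topology

/-- Harmonic partial sum `R(p,q) = Σ_{j=p}^q 1/j`. -/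
noncomputable def harmSum (p q : ℕ) : ℝ := ∑ j ∈ Finset.Icc p q, (1 : ℝ) / j

/-- auxiliary: `harmonic n` as a real equals `harmSum 1 n`. -/
lemma harm_cast_eq (n : ℕ) : ((harmonic n : ℚ) : ℝ) = harmSum 1 n := by
  rw [harmonic_eq_sum_Icc, harmSum]
  push_cast
  simp [one_div]

lemma harmSum_Ioc (p q : ℕ) (hp : 1 ≤ p) :
    harmSum p q = ∑ j ∈ Finset.Ioc (p - 1) q, (1 : ℝ) / j := by
  have h : Finset.Icc p q = Finset.Ioc (p - 1) q := by
    rw [← Finset.Icc_add_one_left_eq_Ioc]; congr 1; omega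
  rw [harmSum, h]

lemma harmSum_eq (p q : ℕ) (hp : 2 ≤ p) (hpq : p - 1 ≤ q) :
    harmSum p q = ((harmonic q : ℚ) : ℝ) - ((harmonic (p - 1) : ℚ) : ℝ) := by
  rw [harm_cast_eq, harm_cast_eq, harmSum_Ioc p q (by omega),
    harmSum_Ioc 1 q (le_refl 1), harmSum_Ioc 1 (p - 1) (le_refl 1)]
  simp only [Nat.sub_self]
  rw [← Finset.sum_Ioc_consecutive (fun j => (1 : ℝ) / j) (by omega : 0 ≤ p - 1) hpq]
  ring

/-- auxiliary function whose limit is the Euler–Mascheroni constant -/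
noncomputable def hsf (n : ℕ) : ℝ := ((harmonic n : ℚ) : ℝ) - Real.log n

lemma hsf_tendsto : Tendsto hsf atTop (𝓝 Real.eulerMascheroniConstant) :=
  Real.tendsto_harmonic_sub_log

/-- auxiliary limit: ratio of nearby quantities tends to 1, so log of ratio tends to 0. -/
lemma log_ratio_tendsto (a b : ℕ → ℝ) (hb : Tendsto b atTop atTop)
    (hab : ∀ᶠ n in atTop, |a n - b n| ≤ 2) :
    Tendsto (fun n => Real.log (a n / b n)) atTop (𝓝 0) := by
  have h0 : Tendsto (fun n => a n / b n) atTop (𝓝 1) := by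
    have h1 : Tendsto (fun n => (a n - b n) / b n) atTop (𝓝 0) := by
      apply squeeze_zero_norm' ?_ (tendsto_const_nhds.div_atTop hb (a := (2:ℝ)))
      filter_upwards [hab, hb.eventually_ge_atTop 1] with n h hb1
      rw [norm_div, Real.norm_eq_abs, Real.norm_eq_abs, abs_of_pos (by linarith : (0:ℝ) < b n)]
      gcongr
    have heq : (fun n => 1 + (a n - b n) / b n) =ᶠ[atTop] fun n => a n / b n := by
      filter_upwards [hb.eventually_gt_atTop 0] with n hn
      field_simp
      ring
    have := (tendsto_const_nhds.add h1).congr' heq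
    simpa using this
  have hlog := (Real.continuousAt_log one_ne_zero).tendsto.comp h0
  simpa [Function.comp_def] using hlog

/-- along any sequence of admissible pairs `(k⁻,k⁺)` (i.e. positive
integers with `k⁻ < k⁺ < 3k⁻`) with `k⁻ → ∞`, the quantity
`R(k⁻, ⌊(k⁺+k⁻)/2⌋) + R(k⁺ - L(k⁻,k⁺), ⌈(k⁺+k⁻)/2⌉)` converges to `log 2`,
where `k⁺ - L(k⁻,k⁺) = ⌊(k⁻+k⁺)²/(8k⁻)⌋`. -/
theorem stmt_4 (km kp : ℕ → ℕ) (hpos : ∀ n, 0 < km n) (h1 : ∀ n, km n < kp n)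
    (h2 : ∀ n, kp n < 3 * km n) (hinf : Tendsto km atTop atTop) :
    Tendsto (fun n =>
        harmSum (km n) ((kp n + km n) / 2) +
          harmSum ((km n + kp n) ^ 2 / (8 * km n)) ((kp n + km n + 1) / 2))
      atTop (𝓝 (Real.log 2)) := by
  have natT : ∀ g : ℕ → ℕ, (∀ b : ℕ, ∀ᶠ n in atTop, b ≤ g n) → Tendsto g atTop atTop :=
    fun g h => tendsto_atTop.mpr h
  have hkR : Tendsto (fun n => (km n : ℝ)) atTop atTop :=
    tendsto_natCast_atTop_atTop.comp hinf
  -- nat tendsto facts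
  have hm₁N : Tendsto (fun n => (kp n + km n) / 2) atTop atTop := by
    refine natT _ fun b => ?_
    filter_upwards [hinf.eventually_ge_atTop b] with n hn
    have := h1 n; omega
  have hm₂N : Tendsto (fun n => (kp n + km n + 1) / 2) atTop atTop := by
    refine natT _ fun b => ?_
    filter_upwards [hinf.eventually_ge_atTop b] with n hn
    have := h1 n; omega
  have hk1N : Tendsto (fun n => km n - 1) atTop atTop := by
    refine natT _ fun b => ?_
    filter_upwards [hinf.eventually_ge_atTop (b + 1)] with n hn
    omega
  have hAN : Tendsto (fun n => (km n + kp n) ^ 2 / (8 * km n)) atTop atTop := by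
    refine natT _ fun b => ?_
    filter_upwards [hinf.eventually_ge_atTop (2 * b + 2)] with n hn
    rw [Nat.le_div_iff_mul_le (by have := hpos n; positivity)]
    nlinarith [h1 n, hpos n]
  have hA1N : Tendsto (fun n => (km n + kp n) ^ 2 / (8 * km n) - 1) atTop atTop := by
    refine natT _ fun b => ?_
    filter_upwards [hAN.eventually_ge_atTop (b + 1)] with n hn
    omega
  -- real denominator tendsto facts
  have hSR : Tendsto (fun n => ((kp n + km n : ℕ) : ℝ)) atTop atTop := by
    refine tendsto_natCast_atTop_atTop.comp (natT _ fun b => ?_)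
    filter_upwards [hinf.eventually_ge_atTop b] with n hn
    omega
  have hSR2 : Tendsto (fun n => ((kp n + km n : ℕ) : ℝ) / 2) atTop atTop :=
    hSR.atTop_div_const two_pos
  have hBR : Tendsto (fun n => ((kp n + km n : ℕ) : ℝ) ^ 2 / (8 * (km n : ℝ))) atTop atTop := by
    refine tendsto_atTop_mono' atTop ?_ (hkR.atTop_div_const two_pos)
    filter_upwards with n
    have hk : (0 : ℝ) < km n := by exact_mod_cast hpos n
    have hkp : (km n : ℝ) < kp n := by exact_mod_cast h1 n
    rw [div_le_div_iff₀ two_pos (by positivity)]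
    push_cast
    nlinarith
  -- the four log-ratio limits
  have L1 : Tendsto (fun n => Real.log ((((kp n + km n) / 2 : ℕ) : ℝ) /
      (((kp n + km n : ℕ) : ℝ) / 2))) atTop (𝓝 0) := by
    refine log_ratio_tendsto _ _ hSR2 ?_
    filter_upwards with n
    have h' : 2 * ((kp n + km n) / 2) ≤ kp n + km n ∧ kp n + km n ≤ 2 * ((kp n + km n) / 2) + 1 := by
      omega
    obtain ⟨ha, hb⟩ := h'
    have ha' : (2 : ℝ) * (((kp n + km n) / 2 : ℕ) : ℝ) ≤ ((kp n + km n : ℕ) : ℝ) := by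
      exact_mod_cast ha
    have hb' : ((kp n + km n : ℕ) : ℝ) ≤ 2 * (((kp n + km n) / 2 : ℕ) : ℝ) + 1 := by
      exact_mod_cast hb
    rw [abs_le]; constructor <;> linarith
  have L2 : Tendsto (fun n => Real.log ((((kp n + km n + 1) / 2 : ℕ) : ℝ) /
      (((kp n + km n : ℕ) : ℝ) / 2))) atTop (𝓝 0) := by
    refine log_ratio_tendsto _ _ hSR2 ?_
    filter_upwards with n
    have h' : kp n + km n ≤ 2 * ((kp n + km n + 1) / 2) ∧
        2 * ((kp n + km n + 1) / 2) ≤ kp n + km n + 1 := by omega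
    obtain ⟨ha, hb⟩ := h'
    have ha' : ((kp n + km n : ℕ) : ℝ) ≤ 2 * (((kp n + km n + 1) / 2 : ℕ) : ℝ) := by
      exact_mod_cast ha
    have hb' : (2 : ℝ) * (((kp n + km n + 1) / 2 : ℕ) : ℝ) ≤ ((kp n + km n : ℕ) : ℝ) + 1 := by
      exact_mod_cast hb
    rw [abs_le]; constructor <;> linarith
  have L3 : Tendsto (fun n => Real.log (((km n - 1 : ℕ) : ℝ) / (km n : ℝ))) atTop (𝓝 0) := by
    refine log_ratio_tendsto _ _ hkR ?_
    filter_upwards with n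
    have := hpos n
    have ha : ((km n - 1 : ℕ) : ℝ) = (km n : ℝ) - 1 := by
      push_cast [Nat.cast_sub (by omega : 1 ≤ km n)]; ring
    rw [ha, abs_le]; constructor <;> linarith
  have L4 : Tendsto (fun n => Real.log ((((km n + kp n) ^ 2 / (8 * km n) - 1 : ℕ) : ℝ) /
      (((kp n + km n : ℕ) : ℝ) ^ 2 / (8 * (km n : ℝ))))) atTop (𝓝 0) := by
    refine log_ratio_tendsto _ _ hBR ?_
    filter_upwards [hAN.eventually_ge_atTop 1, hinf.eventually_ge_atTop 1] with n hA1 hk1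
    set A := (km n + kp n) ^ 2 / (8 * km n) with hAdef
    have hd := Nat.div_add_mod ((km n + kp n) ^ 2) (8 * km n)
    have hmlt : (km n + kp n) ^ 2 % (8 * km n) < 8 * km n := Nat.mod_lt _ (by omega)
    set r := (km n + kp n) ^ 2 % (8 * km n) with hrdef
    have hnat : (kp n + km n) ^ 2 = 8 * km n * A + r := by
      rw [Nat.add_comm (kp n) (km n), hAdef, hrdef]
      exact (Nat.div_add_mod _ _).symm
    have hdc : ((kp n + km n : ℕ) : ℝ) ^ 2 = 8 * (km n : ℝ) * (A : ℝ) + (r : ℝ) := by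
      exact_mod_cast hnat
    have hr0 : (0 : ℝ) ≤ (r : ℝ) := by positivity
    have hrD : (r : ℝ) < 8 * (km n : ℝ) := by exact_mod_cast hmlt
    have hkpos : (0 : ℝ) < 8 * (km n : ℝ) := by
      have : (1 : ℝ) ≤ km n := by exact_mod_cast hk1
      linarith
    have hA1c : ((A - 1 : ℕ) : ℝ) = (A : ℝ) - 1 := by
      push_cast [Nat.cast_sub hA1]; ring
    have hB : ((kp n + km n : ℕ) : ℝ) ^ 2 / (8 * (km n : ℝ)) = (A : ℝ) + (r : ℝ) / (8 * (km n : ℝ)) := by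
      rw [hdc]; field_simp
    rw [hA1c, hB, abs_le]
    have h01 : (0 : ℝ) ≤ (r : ℝ) / (8 * (km n : ℝ)) := by positivity
    have h02 : (r : ℝ) / (8 * (km n : ℝ)) ≤ 1 := by
      rw [div_le_one hkpos]; linarith
    constructor <;> linarith
  -- the harmonic-minus-log limits
  set γ := Real.eulerMascheroniConstant with hγ
  have T1 : Tendsto (fun n => hsf ((kp n + km n) / 2)) atTop (𝓝 γ) := hsf_tendsto.comp hm₁N
  have T2 : Tendsto (fun n => hsf (km n - 1)) atTop (𝓝 γ) := hsf_tendsto.comp hk1N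
  have T3 : Tendsto (fun n => hsf ((kp n + km n + 1) / 2)) atTop (𝓝 γ) := hsf_tendsto.comp hm₂N
  have T4 : Tendsto (fun n => hsf ((km n + kp n) ^ 2 / (8 * km n) - 1)) atTop (𝓝 γ) :=
    hsf_tendsto.comp hA1N
  -- combined limit
  have hfin : Tendsto (fun n =>
      (hsf ((kp n + km n) / 2) - hsf (km n - 1)) +
      (hsf ((kp n + km n + 1) / 2) - hsf ((km n + kp n) ^ 2 / (8 * km n) - 1)) +
      (Real.log ((((kp n + km n) / 2 : ℕ) : ℝ) / (((kp n + km n : ℕ) : ℝ) / 2)) +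
       Real.log ((((kp n + km n + 1) / 2 : ℕ) : ℝ) / (((kp n + km n : ℕ) : ℝ) / 2)) -
       Real.log (((km n - 1 : ℕ) : ℝ) / (km n : ℝ)) -
       Real.log ((((km n + kp n) ^ 2 / (8 * km n) - 1 : ℕ) : ℝ) /
         (((kp n + km n : ℕ) : ℝ) ^ 2 / (8 * (km n : ℝ))))) +
      Real.log 2) atTop (𝓝 ((γ - γ) + (γ - γ) + (0 + 0 - 0 - 0) + Real.log 2)) :=
    (((T1.sub T2).add (T3.sub T4)).add (((L1.add L2).sub L3).sub L4)).add tendsto_const_nhds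
  have hval : (γ - γ) + (γ - γ) + (0 + 0 - 0 - 0) + Real.log 2 = Real.log 2 := by ring
  rw [hval] at hfin
  -- eventual equality
  refine hfin.congr' ?_
  filter_upwards [hinf.eventually_ge_atTop 9, hAN.eventually_ge_atTop 2] with n hk9 hA2
  have hkK := h1 n
  have h3k := h2 n
  have hk0 := hpos n
  -- nat inequalities
  have hm1k : km n - 1 ≤ (kp n + km n) / 2 := by omega
  have hAm2 : (km n + kp n) ^ 2 / (8 * km n) - 1 ≤ (kp n + km n + 1) / 2 := by
    have e1 : (km n + kp n) ^ 2 ≤ (4 * km n) * (km n + kp n) := by nlinarith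
    have e2 : (km n + kp n) ^ 2 / (8 * km n) ≤ ((4 * km n) * (km n + kp n)) / (8 * km n) :=
      Nat.div_le_div_right e1
    have e3 : ((4 * km n) * (km n + kp n)) / (8 * km n) = (km n + kp n) / 2 := by
      rw [show 8 * km n = (4 * km n) * 2 by ring]
      exact Nat.mul_div_mul_left _ 2 (by omega)
    rw [e3] at e2
    omega
  rw [harmSum_eq (km n) ((kp n + km n) / 2) (by omega) hm1k,
    harmSum_eq ((km n + kp n) ^ 2 / (8 * km n)) ((kp n + km n + 1) / 2) hA2 hAm2]
  simp only [hsf]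
  -- positivity facts for logs
  have hm1pos : (0 : ℝ) < (((kp n + km n) / 2 : ℕ) : ℝ) := by
    exact_mod_cast (by omega : 0 < (kp n + km n) / 2)
  have hm2pos : (0 : ℝ) < (((kp n + km n + 1) / 2 : ℕ) : ℝ) := by
    exact_mod_cast (by omega : 0 < (kp n + km n + 1) / 2)
  have hk1pos : (0 : ℝ) < ((km n - 1 : ℕ) : ℝ) := by
    exact_mod_cast (by omega : 0 < km n - 1)
  have hA1pos : (0 : ℝ) < (((km n + kp n) ^ 2 / (8 * km n) - 1 : ℕ) : ℝ) := by
    exact_mod_cast (by omega : 0 < (km n + kp n) ^ 2 / (8 * km n) - 1)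
  have hSpos : (0 : ℝ) < ((kp n + km n : ℕ) : ℝ) := by
    exact_mod_cast (by omega : 0 < kp n + km n)
  have hkpos : (0 : ℝ) < ((km n : ℕ) : ℝ) := by exact_mod_cast hk0
  have h8 : Real.log 8 = 3 * Real.log 2 := by
    rw [show (8 : ℝ) = 2 ^ 3 by norm_num, Real.log_pow]; norm_num
  rw [Real.log_div hm1pos.ne' (by positivity),
    Real.log_div hm2pos.ne' (by positivity),
    Real.log_div hk1pos.ne' hkpos.ne',
    Real.log_div hA1pos.ne' (by positivity),
    Real.log_div hSpos.ne' (two_ne_zero),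
    Real.log_div (by positivity) (by positivity : (8 * (km n : ℝ)) ≠ 0),
    Real.log_pow, Real.log_mul (by norm_num : (8:ℝ) ≠ 0) hkpos.ne', h8]
  push_cast
  ring
end

section
/- Let X = {0,1}^ℤ with the shift σ, * = 0^∞ the zero sequence, and f(u) = g(k_u) where k_u = min{|n| : u_n = 1} and g : ℕ → (0,∞) with g(k) → 0. Then the singular suspension space X^f is well defined (i.e., the uniform divergence hypothesis holds) if and only if Σ_{k∈ℕ} g(k) = +∞. -/
open MeasureTheory Filter Topology
open scoped ENNReal

/-- The full shift space `{0,1}^ℤ`. -/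
abbrev BSeq := ℤ → Bool

/-- The zero sequence `0^∞`. -/
def zeroSeq : BSeq := fun _ => false

/-- The (forward) shift `σ`. -/
def shiftMap : BSeq → BSeq := fun u n => u (n + 1)

/-- The backward shift `σ⁻¹`. -/
def shiftBack : BSeq → BSeq := fun u n => u (n - 1)

/-- `k_u = min {|n| : u_n = 1}`. -/
noncomputable def kabs (u : BSeq) : ℕ := sInf {m : ℕ | ∃ n : ℤ, n.natAbs = m ∧ u n = true}

open Classical in
/-- The roof function `f(u) = g(k_u)`, `f(0^∞) = 0`. -/
noncomputable def fRoof (g : ℕ → ℝ) (u : BSeq) : ℝ := if u = zeroSeq then 0 else g (kabs u)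

lemma kabs_le {u : BSeq} {n : ℤ} (h : u n = true) : kabs u ≤ n.natAbs := by
  rw [kabs]
  exact Nat.sInf_le (s := {m : ℕ | ∃ n : ℤ, n.natAbs = m ∧ u n = true}) ⟨n, rfl, h⟩

lemma kabs_spec {u : BSeq} (h : u ≠ zeroSeq) : ∃ n : ℤ, n.natAbs = kabs u ∧ u n = true := by
  have hne : ∃ n : ℤ, u n = true := by
    by_contra hc
    push_neg at hc
    exact h (funext fun n => by simpa [zeroSeq] using hc n)
  obtain ⟨n, hn⟩ := hne
  have hmem : kabs u ∈ {m : ℕ | ∃ n : ℤ, n.natAbs = m ∧ u n = true} := by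
    rw [kabs]
    exact Nat.sInf_mem ⟨n.natAbs, n, rfl, hn⟩
  exact hmem

lemma shiftMap_ne {u : BSeq} (h : u ≠ zeroSeq) : shiftMap u ≠ zeroSeq := by
  intro hz
  apply h
  funext n
  have := congrFun hz (n - 1)
  simpa [shiftMap, zeroSeq] using this

lemma shiftBack_ne {u : BSeq} (h : u ≠ zeroSeq) : shiftBack u ≠ zeroSeq := by
  intro hz
  apply h
  funext n
  have := congrFun hz (n + 1)
  simpa [shiftBack, zeroSeq] using this

lemma kabs_shiftMap_le {u : BSeq} (h : u ≠ zeroSeq) : kabs (shiftMap u) ≤ kabs u + 1 := by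
  obtain ⟨n, hn, hu⟩ := kabs_spec h
  have h2 : shiftMap u (n - 1) = true := by simpa [shiftMap] using hu
  have := kabs_le h2
  omega

lemma kabs_shiftBack_le {u : BSeq} (h : u ≠ zeroSeq) : kabs (shiftBack u) ≤ kabs u + 1 := by
  obtain ⟨n, hn, hu⟩ := kabs_spec h
  have h2 : shiftBack u (n + 1) = true := by simpa [shiftBack] using hu
  have := kabs_le h2
  omega

lemma iterate_ne {T : BSeq → BSeq} (hT : ∀ u : BSeq, u ≠ zeroSeq → T u ≠ zeroSeq)
    {u : BSeq} (h : u ≠ zeroSeq) (k : ℕ) : T^[k] u ≠ zeroSeq := by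
  induction k with
  | zero => simpa
  | succ k ih => rw [Function.iterate_succ_apply']; exact hT _ ih

lemma ivt {d : ℕ → ℕ} (hd : ∀ k, d (k + 1) ≤ d k + 1) {v k : ℕ} (h0 : d 0 ≤ v)
    (hk : v ≤ d k) : ∃ j ≤ k, d j = v := by
  induction k with
  | zero => exact ⟨0, le_rfl, by omega⟩
  | succ k ih =>
    by_cases hvk : v ≤ d k
    · obtain ⟨j, hj, hdj⟩ := ih hvk
      exact ⟨j, hj.trans (Nat.le_succ k), hdj⟩
    · have := hd k
      exact ⟨k + 1, le_rfl, by omega⟩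

/-- Key combinatorial lemma. -/
lemma key (g : ℕ → ℝ) (hgpos : ∀ k, 0 < g k)
    (hdiv : ∑' k : ℕ, ENNReal.ofReal (g k) = ⊤) {M : ℝ} (hM : 0 < M) (N : ℕ) :
    ∃ K : ℕ, ∀ d : ℕ → ℕ, d 0 ≤ N → (∀ k, d (k + 1) ≤ d k + 1) →
      M < ∑ k ∈ Finset.range (K + 1), g (d k) := by
  -- find V ≥ N with M < ∑_{v ∈ Ico N (V+1)} g v
  have htend := ENNReal.tendsto_nat_tsum (fun k => ENNReal.ofReal (g k))
  rw [hdiv] at htend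
  have hc : ENNReal.ofReal (M + ∑ k ∈ Finset.range N, g k) < ⊤ := ENNReal.ofReal_lt_top
  have hev := htend.eventually (lt_mem_nhds hc)
  obtain ⟨n, hn⟩ := hev.exists
  have hsum_eq : ∀ m : ℕ, (∑ k ∈ Finset.range m, ENNReal.ofReal (g k))
      = ENNReal.ofReal (∑ k ∈ Finset.range m, g k) := by
    intro m
    rw [← ENNReal.ofReal_sum_of_nonneg]
    intro i _; exact (hgpos i).le
  rw [hsum_eq] at hn
  have hnonneg : 0 ≤ M + ∑ k ∈ Finset.range N, g k := by
    have : 0 ≤ ∑ k ∈ Finset.range N, g k := Finset.sum_nonneg fun i _ => (hgpos i).le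
    linarith
  have hlt : M + ∑ k ∈ Finset.range N, g k < ∑ k ∈ Finset.range n, g k :=
    (ENNReal.ofReal_lt_ofReal_iff_of_nonneg hnonneg).mp hn
  set V : ℕ := max n N with hV
  have hrange : ∑ k ∈ Finset.range n, g k ≤ ∑ k ∈ Finset.range (V + 1), g k := by
    apply Finset.sum_le_sum_of_subset_of_nonneg
    · exact Finset.range_subset_range.mpr (by omega)
    · intro i _ _; exact (hgpos i).le
  have hsplit : ∑ k ∈ Finset.range (V + 1), g k
      = (∑ k ∈ Finset.range N, g k) + ∑ v ∈ Finset.Ico N (V + 1), g v := by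
    rw [Finset.range_eq_Ico, Finset.range_eq_Ico]
    exact (Finset.sum_Ico_consecutive g (Nat.zero_le N) (by omega : N ≤ V + 1)).symm
  have hIco : M < ∑ v ∈ Finset.Ico N (V + 1), g v := by
    rw [hsplit] at hrange
    linarith
  -- ε = min of g on [0, V]
  have hne : (Finset.range (V + 1)).Nonempty := ⟨0, by simp⟩
  set ε : ℝ := (Finset.range (V + 1)).inf' hne g with hε
  have hεpos : 0 < ε := by
    obtain ⟨i, hi, hieq⟩ := (Finset.range (V + 1)).exists_mem_eq_inf' hne g
    rw [hε, hieq]; exact hgpos i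
  set K : ℕ := V + ⌈M / ε⌉₊ + 1 with hK
  refine ⟨K, fun d hd0 hdlip => ?_⟩
  by_cases hcase : ∀ k ∈ Finset.range (K + 1), d k ≤ V
  · -- all low: each term ≥ ε
    have hterm : ∀ k ∈ Finset.range (K + 1), ε ≤ g (d k) := by
      intro k hk
      exact Finset.inf'_le g (Finset.mem_range.mpr (by have := hcase k hk; omega))
    have : (K + 1 : ℝ) * ε ≤ ∑ k ∈ Finset.range (K + 1), g (d k) := by
      calc (K + 1 : ℝ) * ε = ∑ _k ∈ Finset.range (K + 1), ε := by
            rw [Finset.sum_const, Finset.card_range]; push_cast; ring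
        _ ≤ _ := Finset.sum_le_sum hterm
    have hMK : M < (K + 1 : ℝ) * ε := by
      have h1 : M / ε ≤ (⌈M / ε⌉₊ : ℝ) := Nat.le_ceil _
      have h2 : (⌈M / ε⌉₊ : ℝ) + 1 ≤ (K + 1 : ℝ) := by
        rw [hK]; push_cast; linarith [Nat.cast_nonneg (α := ℝ) V]
      have h3 : M = (M / ε) * ε := by field_simp
      nlinarith
    linarith
  · -- some k with d k > V : IVT gives each level v ∈ [N, V] attained
    push_neg at hcase
    obtain ⟨k₀, hk₀, hdk₀⟩ := hcase
    have hmap : ∀ v : ℕ, ∃ j : ℕ, v ∈ Finset.Ico N (V + 1) →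
        j ∈ Finset.range (K + 1) ∧ d j = v := by
      intro v
      by_cases hv : v ∈ Finset.Ico N (V + 1)
      · obtain ⟨hv1, hv2⟩ := Finset.mem_Ico.mp hv
        obtain ⟨j, hj, hdj⟩ := ivt hdlip (v := v) (k := k₀) (by omega) (by omega)
        exact ⟨j, fun _ => ⟨Finset.mem_range.mpr (by have := Finset.mem_range.mp hk₀; omega), hdj⟩⟩
      · exact ⟨0, fun h => absurd h hv⟩
    choose j hj using hmap
    have hinj : Set.InjOn j (Finset.Ico N (V + 1)) := by
      intro a ha b hb hab
      have h1 := (hj a ha).2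
      have h2 := (hj b hb).2
      rw [← h1, ← h2, hab]
    calc M < ∑ v ∈ Finset.Ico N (V + 1), g v := hIco
      _ = ∑ v ∈ Finset.Ico N (V + 1), g (d (j v)) := by
          apply Finset.sum_congr rfl
          intro v hv; rw [(hj v hv).2]
      _ = ∑ i ∈ (Finset.Ico N (V + 1)).image j, g (d i) := by
          rw [Finset.sum_image]
          intro a ha b hb hab; exact hinj ha hb hab
      _ ≤ ∑ k ∈ Finset.range (K + 1), g (d k) := by
          apply Finset.sum_le_sum_of_subset_of_nonneg
          · intro i hi
            obtain ⟨v, hv, hvi⟩ := Finset.mem_image.mp hi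
            rw [← hvi]; exact (hj v hv).1
          · intro i _ _; exact (hgpos (d i)).le

lemma shiftMap_iterate (u : BSeq) (k : ℕ) : shiftMap^[k] u = fun n => u (n + k) := by
  induction k with
  | zero => simp
  | succ k ih =>
    rw [Function.iterate_succ_apply', ih]
    funext n
    show u (n + 1 + k) = u (n + (k + 1 : ℕ))
    congr 1
    push_cast
    ring

/-- with `f(u) = g(k_u)`, `g > 0`, `g(k) → 0`, the singular suspension
space `X^f` over the full shift is well defined — i.e., the uniform divergence
hypothesis (H) holds — if and only if `Σ_k g(k) = +∞`. -/
theorem stmt_11 (g : ℕ → ℝ) (hgpos : ∀ k, 0 < g k) (hg0 : Tendsto g atTop (𝓝 0)) :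
    (∀ U : Set BSeq, IsOpen U → zeroSeq ∈ U → ∀ M : ℝ, 0 < M → ∃ K : ℕ, ∀ x ∉ U,
        (M < ∑ k ∈ Finset.range (K + 1), fRoof g (shiftMap^[k] x)) ∧
        (M < ∑ k ∈ Finset.range (K + 1), fRoof g (shiftBack^[k] x)))
      ↔ ∑' k : ℕ, ENNReal.ofReal (g k) = ⊤ := by
  constructor
  · -- (H) → divergence, by contraposition
    intro hH
    by_contra hfin
    set S : ℝ := (∑' k : ℕ, ENNReal.ofReal (g k)).toReal with hS
    have hSpos : 0 < S := by
      have h1 : ENNReal.ofReal (g 0) ≤ ∑' k : ℕ, ENNReal.ofReal (g k) :=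
        ENNReal.le_tsum 0
      have h2 : g 0 ≤ S := by
        rw [hS, ← ENNReal.toReal_ofReal (hgpos 0).le]
        exact ENNReal.toReal_mono hfin h1
      linarith [hgpos 0]
    have hUopen : IsOpen {u : BSeq | u 0 = false} := by
      have : {u : BSeq | u 0 = false} = (fun u : BSeq => u 0) ⁻¹' {false} := rfl
      rw [this]
      exact (continuous_apply (0 : ℤ)).isOpen_preimage _ (isOpen_discrete _)
    obtain ⟨K, hK⟩ := hH _ hUopen rfl S hSpos
    set x : BSeq := fun n => decide (n = 0) with hx
    have hxU : x ∉ {u : BSeq | u 0 = false} := by simp [hx]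
    obtain ⟨hfwd, _⟩ := hK x hxU
    -- compute forward sum = ∑_{k ≤ K} g k
    have hterm : ∀ k : ℕ, fRoof g (shiftMap^[k] x) = g k := by
      intro k
      have hit : shiftMap^[k] x = fun n : ℤ => decide (n + (k : ℤ) = 0) := by
        rw [shiftMap_iterate]
      have htrue0 : shiftMap^[k] x (-(k : ℤ)) = true := by
        rw [hit]
        simp
      have hne : shiftMap^[k] x ≠ zeroSeq := by
        intro hz
        rw [hz] at htrue0
        simp [zeroSeq] at htrue0
      have hkabs : kabs (shiftMap^[k] x) = k := by
        apply le_antisymm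
        · have := kabs_le htrue0
          omega
        · obtain ⟨n, hn, htrue⟩ := kabs_spec hne
          rw [hit] at htrue
          simp only [decide_eq_true_eq] at htrue
          omega
      rw [fRoof, if_neg hne, hkabs]
    rw [Finset.sum_congr rfl (fun k _ => hterm k)] at hfwd
    -- but partial sums are ≤ S
    have hle : ∑ k ∈ Finset.range (K + 1), g k ≤ S := by
      have h1 : ∑ k ∈ Finset.range (K + 1), ENNReal.ofReal (g k)
          ≤ ∑' k : ℕ, ENNReal.ofReal (g k) := ENNReal.sum_le_tsum _
      have h2 := ENNReal.toReal_mono hfin h1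
      rw [ENNReal.toReal_sum (fun a _ => ENNReal.ofReal_ne_top)] at h2
      calc ∑ k ∈ Finset.range (K + 1), g k
          = ∑ k ∈ Finset.range (K + 1), (ENNReal.ofReal (g k)).toReal := by
            apply Finset.sum_congr rfl
            intro k _
            rw [ENNReal.toReal_ofReal (hgpos k).le]
        _ ≤ S := h2
    linarith
  · -- divergence → (H)
    intro hdiv U hU hzU M hM
    obtain ⟨I, u, hIu, hsub⟩ := isOpen_pi_iff.mp hU zeroSeq hzU
    set N : ℕ := I.sup Int.natAbs with hN
    obtain ⟨K, hK⟩ := key g hgpos hdiv hM N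
    refine ⟨K, fun x hx => ?_⟩
    -- x ∉ U gives a `true` coordinate within [-N, N]
    have hx1 : ∃ n ∈ I, x n = true := by
      by_contra hc
      push_neg at hc
      apply hx
      apply hsub
      intro i hi
      have : x i = false := by
        have := hc i hi
        simpa using this
      rw [this]
      have : zeroSeq i ∈ u i := (hIu i hi).2
      exact this
    obtain ⟨n₀, hn₀I, hn₀⟩ := hx1
    have hxne : x ≠ zeroSeq := by
      intro hz
      rw [hz] at hn₀
      simp [zeroSeq] at hn₀
    have hkx : kabs x ≤ N := le_trans (kabs_le hn₀) (Finset.le_sup hn₀I)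
    constructor
    · -- forward
      have hne : ∀ k : ℕ, shiftMap^[k] x ≠ zeroSeq :=
        iterate_ne (fun _ h => shiftMap_ne h) hxne
      have := hK (fun k => kabs (shiftMap^[k] x)) (by simpa using hkx)
        (fun k => by
          show kabs (shiftMap^[k + 1] x) ≤ kabs (shiftMap^[k] x) + 1
          rw [Function.iterate_succ_apply']
          exact kabs_shiftMap_le (hne k))
      calc M < ∑ k ∈ Finset.range (K + 1), g (kabs (shiftMap^[k] x)) := this
        _ = ∑ k ∈ Finset.range (K + 1), fRoof g (shiftMap^[k] x) := by
            apply Finset.sum_congr rfl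
            intro k _
            rw [fRoof, if_neg (hne k)]
    · -- backward
      have hne : ∀ k : ℕ, shiftBack^[k] x ≠ zeroSeq :=
        iterate_ne (fun _ h => shiftBack_ne h) hxne
      have := hK (fun k => kabs (shiftBack^[k] x)) (by simpa using hkx)
        (fun k => by
          show kabs (shiftBack^[k + 1] x) ≤ kabs (shiftBack^[k] x) + 1
          rw [Function.iterate_succ_apply']
          exact kabs_shiftBack_le (hne k))
      calc M < ∑ k ∈ Finset.range (K + 1), g (kabs (shiftBack^[k] x)) := this
        _ = ∑ k ∈ Finset.range (K + 1), fRoof g (shiftBack^[k] x) := by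
            apply Finset.sum_congr rfl
            intro k _
            rw [fRoof, if_neg (hne k)]
end

section
/- With X = {0,1}^ℤ, shift σ, Bernoulli measures μ_λ, and roof f(u) = g(k_u) with kg(k) → l ∈ (0,∞): as λ → 0 the suspension-flow measures ν_{μ_λ} = (μ_λ × L)|_{X^f}/∫f dμ_λ converge weakly to the Dirac mass at the singularity *^f; in particular, for each fixed k, ν_{μ_λ}([0^{2k+1}] × ℝ/∼) → 1 as λ → 0. -/
open MeasureTheory Filter Topology
open scoped ENNReal

/-- The domain `{(x,t) : 0 ≤ t ≤ f(x)}` of the singular suspension. -/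
abbrev SingDom (g : ℕ → ℝ) := {p : BSeq × ℝ // 0 ≤ p.2 ∧ p.2 ≤ fRoof g p.1}

/-- The gluing relation `(x, f(x)) ~ (σx, 0)`. -/
def singRel (g : ℕ → ℝ) : SingDom g → SingDom g → Prop :=
  fun a b => a.1.2 = fRoof g a.1.1 ∧ b.1 = (shiftMap a.1.1, 0)

/-- The singular suspension space `X^f`. -/
abbrev SingSusp (g : ℕ → ℝ) := Quot (singRel g)

/-- The singular point `*^f = (0^∞, 0)` of the singular suspension. -/
noncomputable def starF (g : ℕ → ℝ) : SingSusp g :=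
  Quot.mk _ ⟨(zeroSeq, 0), le_refl 0, by simp [fRoof]⟩

/-- `(x,t) ↦` the class of `(x,t)` (with the second coordinate clamped into
`[0, f(x)]`). On the fundamental domain `{0 ≤ t < f(x)}` this is the canonical
projection. -/
noncomputable def eMap (g : ℕ → ℝ) (hg : ∀ u, 0 ≤ fRoof g u) : BSeq × ℝ → SingSusp g :=
  fun p => Quot.mk _ ⟨(p.1, max 0 (min p.2 (fRoof g p.1))),
    le_max_left _ _, max_le (hg p.1) (min_le_right _ _)⟩

/-- The suspension-flow measure `ν_μ = (μ × Leb)|_{X^f} / ∫ f dμ`. -/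
noncomputable def singSuspMeasure (g : ℕ → ℝ) (hg : ∀ u, 0 ≤ fRoof g u) (μ : Measure BSeq) :
    Measure (SingSusp g) :=
  (ENNReal.ofReal (∫ u, fRoof g u ∂μ))⁻¹ •
    (((μ.prod volume).restrict {p : BSeq × ℝ | 0 ≤ p.2 ∧ p.2 < fRoof g p.1}).map (eMap g hg))


namespace Stmt14

lemma zeroSeq_iff {u : BSeq} : u = zeroSeq ↔ ∀ n : ℤ, u n = false :=
  ⟨fun h n => by rw [h]; rfl, fun h => funext h⟩

/-- the cylinder `[0^{2k+1}]`. -/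
def Ak (k : ℕ) : Set BSeq := {u | ∀ n : ℤ, n.natAbs ≤ k → u n = false}

lemma kabs_le {u : BSeq} {n : ℤ} (h : u n = true) : kabs u ≤ n.natAbs :=
  Nat.sInf_le ⟨n, rfl, h⟩

lemma exists_kabs {u : BSeq} (h : u ≠ zeroSeq) :
    ∃ n : ℤ, n.natAbs = kabs u ∧ u n = true := by
  have hne : {m : ℕ | ∃ n : ℤ, n.natAbs = m ∧ u n = true}.Nonempty := by
    rcases not_forall.mp (fun hh => h (zeroSeq_iff.mpr (fun n => hh n))) with ⟨n, hn⟩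
    exact ⟨n.natAbs, n, rfl, Bool.ne_false_iff.mp hn⟩
  exact Nat.sInf_mem hne

lemma ne_zeroSeq_of_true {u : BSeq} {n : ℤ} (h : u n = true) : u ≠ zeroSeq := by
  intro hu; rw [hu] at h; exact Bool.false_ne_true h

lemma kabs_eq {u : BSeq} {m : ℕ} (h1 : ∀ n : ℤ, n.natAbs < m → u n = false)
    (h2 : ∃ n : ℤ, n.natAbs = m ∧ u n = true) : kabs u = m := by
  rcases h2 with ⟨n, hn, hun⟩
  refine le_antisymm (hn ▸ kabs_le hun) ?_
  rcases exists_kabs (ne_zeroSeq_of_true hun) with ⟨n', hn', hun'⟩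
  by_contra hlt
  push_neg at hlt
  have := h1 n' (by omega)
  rw [this] at hun'; exact Bool.false_ne_true hun'

lemma fRoof_eq {u : BSeq} (h : u ≠ zeroSeq) (g : ℕ → ℝ) : fRoof g u = g (kabs u) :=
  if_neg h

lemma fRoof_zeroSeq (g : ℕ → ℝ) : fRoof g zeroSeq = 0 := by simp [fRoof]

lemma fRoof_nonneg {g : ℕ → ℝ} (hgnn : ∀ m, 0 ≤ g m) (u : BSeq) : 0 ≤ fRoof g u := by
  by_cases h : u = zeroSeq
  · simp [fRoof, h]
  · rw [fRoof_eq h]; exact hgnn _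

lemma fRoof_le {g : ℕ → ℝ} {B : ℝ} (hB : ∀ m, g m ≤ B) (hB0 : 0 ≤ B) (u : BSeq) :
    fRoof g u ≤ B := by
  by_cases h : u = zeroSeq
  · simpa [fRoof, h] using hB0
  · rw [fRoof_eq h]; exact hB _

lemma natAbs_le_iff {n : ℤ} {k : ℕ} : n.natAbs ≤ k ↔ n ∈ Finset.Icc (-(k:ℤ)) k := by
  rw [Finset.mem_Icc]; omega

/-- cylinders are in the neighborhood filter -/
lemma cyl_mem_nhds (u : BSeq) (k : ℕ) :
    {v : BSeq | ∀ n : ℤ, n.natAbs ≤ k → v n = u n} ∈ 𝓝 u := by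
  have : {v : BSeq | ∀ n : ℤ, n.natAbs ≤ k → v n = u n}
      = ⋂ n ∈ Finset.Icc (-(k:ℤ)) k, (fun v : BSeq => v n) ⁻¹' {u n} := by
    ext v
    simp only [Set.mem_setOf_eq, Set.mem_iInter, Set.mem_preimage, Set.mem_singleton_iff]
    exact ⟨fun h n hn => h n (natAbs_le_iff.mpr hn), fun h n hn => h n (natAbs_le_iff.mp hn)⟩
  rw [this]
  refine IsOpen.mem_nhds ?_ ?_
  · exact isOpen_biInter_finset fun n _ =>
      (continuous_apply n).isOpen_preimage _ (isOpen_discrete _)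
  · simp only [Set.mem_iInter, Set.mem_preimage, Set.mem_singleton_iff]
    exact fun n _ => trivial

lemma Ak_mem_nhds_zeroSeq (k : ℕ) : Ak k ∈ 𝓝 zeroSeq := cyl_mem_nhds zeroSeq k

lemma fRoof_continuous {g : ℕ → ℝ} (hg0 : Tendsto g atTop (𝓝 0)) (hgnn : ∀ m, 0 ≤ g m) :
    Continuous (fRoof g) := by
  rw [continuous_iff_continuousAt]
  intro u
  by_cases hu : u = zeroSeq
  · subst hu
    rw [ContinuousAt, Metric.tendsto_nhds]
    intro ε hε
    have : ∀ᶠ m in atTop, g m < ε := by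
      filter_upwards [hg0.eventually (gt_mem_nhds hε)] with m hm using hm
    rcases eventually_atTop.mp this with ⟨K, hK⟩
    filter_upwards [Ak_mem_nhds_zeroSeq K] with v hv
    have hfv : fRoof g v < ε := by
      by_cases h : v = zeroSeq
      · simpa [fRoof, h] using hε
      · rw [fRoof_eq h]
        refine hK _ ?_
        rcases exists_kabs h with ⟨n, hn, hvn⟩
        by_contra hlt
        push_neg at hlt
        have := hv n (by omega)
        rw [this] at hvn; exact Bool.false_ne_true hvn
    rw [fRoof_zeroSeq, Real.dist_eq, sub_zero, abs_of_nonneg (fRoof_nonneg hgnn v)]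
    exact hfv
  · have h : fRoof g =ᶠ[𝓝 u] fun _ => fRoof g u := by
      rcases exists_kabs hu with ⟨n₀, hn₀, hun₀⟩
      filter_upwards [cyl_mem_nhds u (kabs u)] with v hv
      have hvn₀ : v n₀ = true := by rw [hv n₀ (le_of_eq hn₀)]; exact hun₀
      have hvz : v ≠ zeroSeq := ne_zeroSeq_of_true hvn₀
      have hk : kabs v = kabs u := by
        refine le_antisymm (hn₀ ▸ kabs_le hvn₀) ?_
        rcases exists_kabs hvz with ⟨m, hm, hvm⟩
        have : u m = true := by
          rw [← hv m]; exact hvm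
          rw [hm]; exact hn₀ ▸ kabs_le hvn₀
        exact hm ▸ kabs_le this
      rw [fRoof_eq hvz, fRoof_eq hu, hk]
    exact continuousAt_const.congr h.symm

end Stmt14

namespace Stmt14

lemma measurable_Ak (k : ℕ) : MeasurableSet (Ak k) := by
  have h : Ak k = ⋂ n : ℤ, {u : BSeq | n.natAbs ≤ k → u n = false} := by
    ext u; simp [Ak]
  rw [h]
  refine MeasurableSet.iInter fun n => ?_
  by_cases hn : n.natAbs ≤ k
  · have : {u : BSeq | n.natAbs ≤ k → u n = false} = (fun u : BSeq => u n) ⁻¹' {false} := by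
      ext u; simp [hn]
    exact this ▸ (measurable_pi_apply n) (measurableSet_singleton false)
  · have : {u : BSeq | n.natAbs ≤ k → u n = false} = Set.univ := by
      ext u; simp [hn]
    exact this ▸ MeasurableSet.univ

lemma Ak_anti {j k : ℕ} (h : j ≤ k) : Ak k ⊆ Ak j := fun u hu n hn => hu n (hn.trans h)

section Bernoulli

variable {μ : Measure BSeq} {p : ℝ}

lemma meas_Ak (hp0 : 0 < p) (hp1 : p < 1)
    (hb : ∀ (s : Finset ℤ) (v : ℤ → Bool), μ {u : BSeq | ∀ n ∈ s, u n = v n}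
        = ∏ n ∈ s, ENNReal.ofReal (if v n then p else 1 - p)) (k : ℕ) :
    μ (Ak k) = ENNReal.ofReal ((1 - p) ^ (2 * k + 1)) := by
  have hset : Ak k = {u : BSeq | ∀ n ∈ Finset.Icc (-(k:ℤ)) k, u n = (fun _ => false) n} := by
    ext u
    simp only [Ak, Set.mem_setOf_eq]
    exact ⟨fun h n hn => h n (natAbs_le_iff.mpr hn), fun h n hn => h n (natAbs_le_iff.mp hn)⟩
  rw [hset, hb]
  simp only [Bool.false_eq_true, if_false]
  rw [Finset.prod_const, Int.card_Icc,
    show ((k:ℤ) + 1 - -(k:ℤ)).toNat = 2 * k + 1 by omega,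
    ← ENNReal.ofReal_pow (by linarith)]

/-- the annulus `{u : kabs u = j+1}`. -/
def Ej (j : ℕ) : Set BSeq := Ak j \ Ak (j + 1)

lemma measurable_Ej (j : ℕ) : MeasurableSet (Ej j) :=
  (measurable_Ak j).diff (measurable_Ak (j + 1))

lemma fRoof_eq_on_Ej (g : ℕ → ℝ) {j : ℕ} {u : BSeq} (hu : u ∈ Ej j) :
    fRoof g u = g (j + 1) := by
  obtain ⟨h1, h2⟩ := hu
  simp only [Ak, Set.mem_setOf_eq, not_forall] at h2
  obtain ⟨n, hn, hnt⟩ := h2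
  have hnt' : u n = true := Bool.ne_false_iff.mp hnt
  have hk : kabs u = j + 1 := by
    refine kabs_eq (fun m hm => h1 m (by omega)) ⟨n, ?_, hnt'⟩
    by_contra hne
    exact hnt (h1 n (by omega))
  rw [fRoof_eq (ne_zeroSeq_of_true hnt'), hk]

lemma meas_Ej (hp0 : 0 < p) (hp1 : p < 1)
    (hb : ∀ (s : Finset ℤ) (v : ℤ → Bool), μ {u : BSeq | ∀ n ∈ s, u n = v n}
        = ∏ n ∈ s, ENNReal.ofReal (if v n then p else 1 - p)) (j : ℕ) :
    μ (Ej j) = ENNReal.ofReal ((1 - p) ^ (2 * j + 1) - (1 - p) ^ (2 * (j + 1) + 1)) := by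
  have hsub : Ak (j + 1) ⊆ Ak j := Ak_anti (Nat.le_succ j)
  have hfin : μ (Ak (j + 1)) ≠ ∞ := by
    rw [meas_Ak hp0 hp1 hb]; exact ENNReal.ofReal_ne_top
  rw [Ej, measure_diff hsub (measurable_Ak (j + 1)).nullMeasurableSet hfin,
    meas_Ak hp0 hp1 hb, meas_Ak hp0 hp1 hb,
    ENNReal.ofReal_sub _ (pow_nonneg (by linarith) _)]

lemma integrable_fRoof {g : ℕ → ℝ} (hg0 : Tendsto g atTop (𝓝 0)) (hgnn : ∀ m, 0 ≤ g m)
    [IsProbabilityMeasure μ] : Integrable (fRoof g) μ := by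
  obtain ⟨B, hB⟩ := hg0.bddAbove_range
  have hB' : ∀ m, g m ≤ B := fun m => hB ⟨m, rfl⟩
  refine (integrable_const (max B 0)).mono'
    ((fRoof_continuous hg0 hgnn).measurable.aestronglyMeasurable) ?_
  filter_upwards with u
  rw [Real.norm_eq_abs, abs_of_nonneg (fRoof_nonneg hgnn u)]
  exact fRoof_le (fun m => (hB' m).trans (le_max_left _ _)) (le_max_right _ _) u

lemma integral_lower (hp0 : 0 < p) (hp1 : p < 1)
    (hb : ∀ (s : Finset ℤ) (v : ℤ → Bool), μ {u : BSeq | ∀ n ∈ s, u n = v n}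
        = ∏ n ∈ s, ENNReal.ofReal (if v n then p else 1 - p))
    [IsProbabilityMeasure μ]
    {g : ℕ → ℝ} (hg0 : Tendsto g atTop (𝓝 0)) (hgnn : ∀ m, 0 ≤ g m) (N : ℕ) :
    p * (1 - p) ^ (2 * N + 1) * (∑ j ∈ Finset.range N, g (j + 1))
      ≤ ∫ u, fRoof g u ∂μ := by
  have hint := integrable_fRoof hg0 hgnn (μ := μ)
  have hstep : ∫ u in ⋃ j ∈ Finset.range N, Ej j, fRoof g u ∂μ
      = ∑ j ∈ Finset.range N, ∫ u in Ej j, fRoof g u ∂μ := by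
    refine integral_biUnion_finset _ (fun j _ => measurable_Ej j) ?_
      (fun j _ => hint.integrableOn)
    have key : ∀ i j : ℕ, i < j → Disjoint (Ej i) (Ej j) := by
      intro i j h
      exact Set.disjoint_left.mpr fun u hui huj => hui.2 (Ak_anti (by omega) huj.1)
    intro i _ j _ hij
    rcases lt_or_gt_of_ne hij with h | h
    · exact key i j h
    · exact (key j i h).symm
  have hterm : ∀ j ∈ Finset.range N,
      p * (1 - p) ^ (2 * N + 1) * g (j + 1) ≤ ∫ u in Ej j, fRoof g u ∂μ := by
    intro j hj
    have hjN : j < N := Finset.mem_range.mp hj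
    have h0 : (0:ℝ) ≤ 1 - p := by linarith
    have h1 : (1:ℝ) - p ≤ 1 := by linarith
    have hEj : ∫ u in Ej j, fRoof g u ∂μ = (μ (Ej j)).toReal * g (j + 1) := by
      rw [setIntegral_congr_fun (measurable_Ej j) (fun u hu => fRoof_eq_on_Ej g hu),
        setIntegral_const, smul_eq_mul]
      rfl
    have hmEj : (μ (Ej j)).toReal = (1 - p) ^ (2 * j + 1) - (1 - p) ^ (2 * (j + 1) + 1) := by
      rw [meas_Ej hp0 hp1 hb, ENNReal.toReal_ofReal]
      have := pow_le_pow_of_le_one h0 h1 (show 2 * j + 1 ≤ 2 * (j + 1) + 1 by omega)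
      linarith
    have hple : p * (1 - p) ^ (2 * N + 1)
        ≤ (1 - p) ^ (2 * j + 1) - (1 - p) ^ (2 * (j + 1) + 1) := by
      have hpw : (1 - p) ^ (2 * N + 1) ≤ (1 - p) ^ (2 * j + 1) :=
        pow_le_pow_of_le_one h0 h1 (by omega)
      have hq : (1 - p) ^ (2 * j + 1) - (1 - p) ^ (2 * (j + 1) + 1)
          = (1 - p) ^ (2 * j + 1) * (1 - (1 - p) ^ 2) := by ring
      rw [hq]
      have hps : p ≤ 1 - (1 - p) ^ 2 := by nlinarith
      have hpw' : p * (1 - p) ^ (2 * N + 1) ≤ p * (1 - p) ^ (2 * j + 1) :=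
        mul_le_mul_of_nonneg_left hpw hp0.le
      have h2 : p * (1 - p) ^ (2 * j + 1) ≤ (1 - p) ^ (2 * j + 1) * (1 - (1 - p) ^ 2) := by
        rw [mul_comm]
        exact mul_le_mul_of_nonneg_left hps (by positivity)
      linarith
    calc p * (1 - p) ^ (2 * N + 1) * g (j + 1)
        ≤ ((1 - p) ^ (2 * j + 1) - (1 - p) ^ (2 * (j + 1) + 1)) * g (j + 1) :=
          mul_le_mul_of_nonneg_right hple (hgnn _)
      _ = ∫ u in Ej j, fRoof g u ∂μ := by rw [hEj, hmEj, mul_comm]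
  calc p * (1 - p) ^ (2 * N + 1) * (∑ j ∈ Finset.range N, g (j + 1))
      = ∑ j ∈ Finset.range N, p * (1 - p) ^ (2 * N + 1) * g (j + 1) := by
        rw [Finset.mul_sum]
    _ ≤ ∑ j ∈ Finset.range N, ∫ u in Ej j, fRoof g u ∂μ :=
        Finset.sum_le_sum hterm
    _ = ∫ u in ⋃ j ∈ Finset.range N, Ej j, fRoof g u ∂μ := hstep.symm
    _ ≤ ∫ u, fRoof g u ∂μ :=
        setIntegral_le_integral hint (Filter.Eventually.of_forall (fRoof_nonneg hgnn))

end Bernoulli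
end Stmt14

namespace Stmt14

lemma tendsto_g_zero {g : ℕ → ℝ} {l : ℝ}
    (hkg : Tendsto (fun k : ℕ => (k : ℝ) * g k) atTop (𝓝 l)) :
    Tendsto g atTop (𝓝 0) := by
  have h1 : Tendsto (fun k : ℕ => ((k : ℝ) * g k) * (1 / (k : ℝ))) atTop (𝓝 (l * 0)) :=
    hkg.mul tendsto_one_div_atTop_nhds_zero_nat
  rw [mul_zero] at h1
  refine h1.congr' ?_
  filter_upwards [eventually_ge_atTop 1] with k hk
  have hk0 : (k : ℝ) ≠ 0 := Nat.cast_ne_zero.mpr (by omega)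
  field_simp

lemma not_summable_g {g : ℕ → ℝ} {l : ℝ} (hl : 0 < l)
    (hkg : Tendsto (fun k : ℕ => (k : ℝ) * g k) atTop (𝓝 l))
    (hgnn : ∀ m, 0 ≤ g m) : ¬ Summable g := by
  intro hs
  have hev : ∀ᶠ k : ℕ in atTop, l / 2 < (k : ℝ) * g k :=
    hkg.eventually (eventually_gt_nhds (by linarith))
  rcases eventually_atTop.mp hev with ⟨M₀, hM⟩
  set M := max M₀ 1 with hMdef
  have hM1 : 1 ≤ M := le_max_right _ _
  have hcomp : ∀ n : ℕ, l / 2 * (1 / ((n : ℝ) + M)) ≤ g (n + M) := by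
    intro n
    have hpos : (0:ℝ) < (n : ℝ) + M := by
      have : (1:ℝ) ≤ (M:ℝ) := by exact_mod_cast hM1
      positivity
    have h := (hM (n + M) (le_trans (le_max_left _ _) (Nat.le_add_left _ _))).le
    push_cast at h
    rw [mul_one_div, div_le_iff₀ hpos]
    nlinarith [hgnn (n + M)]
  have hs1 : Summable (fun n : ℕ => g (n + M)) := (summable_nat_add_iff M).2 hs
  have hs2 : Summable (fun n : ℕ => l / 2 * (1 / ((n : ℝ) + M))) :=
    Summable.of_nonneg_of_le (fun n => by positivity) hcomp hs1
  have hs3 : Summable (fun n : ℕ => 1 / ((n : ℝ) + M)) := by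
    have := hs2.mul_left (l / 2)⁻¹
    refine this.congr fun n => ?_
    field_simp
  have hs4 : Summable (fun n : ℕ => 1 / ((n + M : ℕ) : ℝ)) := by
    refine hs3.congr fun n => ?_
    push_cast; ring
  exact Real.not_summable_one_div_natCast ((summable_nat_add_iff M).1 hs4)

lemma sum_tendsto_atTop {g : ℕ → ℝ} {l : ℝ} (hl : 0 < l)
    (hkg : Tendsto (fun k : ℕ => (k : ℝ) * g k) atTop (𝓝 l))
    (hgnn : ∀ m, 0 ≤ g m) :
    Tendsto (fun N => ∑ j ∈ Finset.range N, g (j + 1)) atTop atTop := by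
  have hns : ¬ Summable (fun j => g (j + 1)) := fun h =>
    not_summable_g hl hkg hgnn ((summable_nat_add_iff 1).1 h)
  exact (not_summable_iff_tendsto_nat_atTop_of_nonneg (fun n => hgnn _)).1 hns

section Bernoulli

variable {μ : Measure BSeq} {p : ℝ}

lemma integral_compl_Ak_le (hp0 : 0 < p) (hp1 : p < 1)
    (hb : ∀ (s : Finset ℤ) (v : ℤ → Bool), μ {u : BSeq | ∀ n ∈ s, u n = v n}
        = ∏ n ∈ s, ENNReal.ofReal (if v n then p else 1 - p))
    [IsProbabilityMeasure μ]
    {g : ℕ → ℝ} (hg0 : Tendsto g atTop (𝓝 0)) (hgnn : ∀ m, 0 ≤ g m)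
    {B : ℝ} (hB : ∀ m, g m ≤ B) (hB0 : 0 ≤ B) (k : ℕ) :
    ∫ u in (Ak k)ᶜ, fRoof g u ∂μ ≤ B * ((2 * k + 1) * p) := by
  have h0 : (0:ℝ) ≤ 1 - p := by linarith
  have hmc : (μ (Ak k)ᶜ).toReal = 1 - (1 - p) ^ (2 * k + 1) := by
    rw [measure_compl (measurable_Ak k) (measure_ne_top μ _), meas_Ak hp0 hp1 hb,
      measure_univ]
    rw [ENNReal.toReal_sub_of_le ?hle ENNReal.one_ne_top]
    · rw [ENNReal.toReal_one, ENNReal.toReal_ofReal (by positivity)]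
    case hle =>
      rw [← ENNReal.ofReal_one]
      exact ENNReal.ofReal_le_ofReal (pow_le_one₀ h0 (by linarith))
  have hb1 : ∫ u in (Ak k)ᶜ, fRoof g u ∂μ ≤ B * (μ (Ak k)ᶜ).toReal := by
    refine le_trans (le_abs_self _) ?_
    rw [← Real.norm_eq_abs]
    refine norm_setIntegral_le_of_norm_le_const (measure_lt_top μ _)
      (fun x _ => ?_)
    rw [Real.norm_eq_abs, abs_of_nonneg (fRoof_nonneg hgnn x)]
    exact fRoof_le hB hB0 x
  have hber : 1 - (1 - p) ^ (2 * k + 1) ≤ (2 * k + 1) * p := by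
    have h := one_add_mul_le_pow (a := -p) (by linarith) (2 * k + 1)
    have : 1 + (2 * k + 1 : ℕ) * (-p) ≤ (1 - p) ^ (2 * k + 1) := by
      rw [← sub_eq_add_neg] at h; exact_mod_cast h
    push_cast at this
    linarith
  calc ∫ u in (Ak k)ᶜ, fRoof g u ∂μ ≤ B * (μ (Ak k)ᶜ).toReal := hb1
    _ = B * (1 - (1 - p) ^ (2 * k + 1)) := by rw [hmc]
    _ ≤ B * ((2 * k + 1) * p) := mul_le_mul_of_nonneg_left hber hB0

end Bernoulli
end Stmt14

namespace Stmt14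

section family

variable {g : ℕ → ℝ} {l : ℝ} (hl : 0 < l)
  (hkg : Tendsto (fun k : ℕ => (k : ℝ) * g k) atTop (𝓝 l))
  (hgnn : ∀ m, 0 ≤ g m)
  {μ : ℝ → Measure BSeq} (hprob : ∀ p, IsProbabilityMeasure (μ p))
  (hber : ∀ p : ℝ, 0 < p → p < 1 → ∀ (s : Finset ℤ) (v : ℤ → Bool),
      μ p {u : BSeq | ∀ n ∈ s, u n = v n}
        = ∏ n ∈ s, ENNReal.ofReal (if v n then p else 1 - p))

include hl hkg hgnn hprob hber

lemma D_pos {p : ℝ} (hp0 : 0 < p) (hp1 : p < 1) (hgpos : ∀ m, 0 < g m) :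
    0 < ∫ u, fRoof g u ∂(μ p) := by
  haveI := hprob p
  have hlow := integral_lower hp0 hp1 (hber p hp0 hp1) (tendsto_g_zero hkg) hgnn 1
  simp only [Finset.range_one, Finset.sum_singleton] at hlow
  have : 0 < p * (1 - p) ^ (2 * 1 + 1) * g (0 + 1) := by
    have h0 : (0:ℝ) < 1 - p := by linarith
    have := hgpos 1
    positivity
  linarith

lemma tendsto_div_atTop :
    Tendsto (fun p => (∫ u, fRoof g u ∂(μ p)) / p) (𝓝[>] (0:ℝ)) atTop := by
  have hg0 := tendsto_g_zero hkg
  rw [tendsto_atTop]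
  intro A
  obtain ⟨N, hN⟩ : ∃ N, 2 * max A 1 ≤ ∑ j ∈ Finset.range N, g (j + 1) :=
    ((sum_tendsto_atTop hl hkg hgnn).eventually (eventually_ge_atTop (2 * max A 1))).exists
  have hev1 : Set.Ioo (0:ℝ) 1 ∈ 𝓝[>] (0:ℝ) :=
    Ioo_mem_nhdsGT_of_mem ⟨le_refl 0, one_pos⟩
  have hcont : Tendsto (fun p : ℝ => (1 - p) ^ (2 * N + 1)) (𝓝[>] (0:ℝ)) (𝓝 1) := by
    have hc : Continuous (fun p : ℝ => (1 - p) ^ (2 * N + 1)) := by continuity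
    have h := hc.tendsto (0:ℝ)
    simp only [sub_zero, one_pow] at h
    exact h.mono_left nhdsWithin_le_nhds
  have hev2 := hcont.eventually (eventually_ge_nhds (by norm_num : (1/2:ℝ) < 1))
  filter_upwards [hev1, hev2] with p hp hhalf
  haveI := hprob p
  have hlow := integral_lower hp.1 hp.2 (hber p hp.1 hp.2) hg0 hgnn N
  rw [le_div_iff₀ hp.1]
  set S := ∑ j ∈ Finset.range N, g (j + 1) with hS
  have hS0 : (0:ℝ) ≤ S := Finset.sum_nonneg fun _ _ => hgnn _
  have hx0 : (0:ℝ) ≤ (1 - p) ^ (2 * N + 1) := pow_nonneg (by linarith [hp.2]) _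
  have hxS : max A 1 ≤ (1 - p) ^ (2 * N + 1) * S := by
    calc max A 1 = (1/2) * (2 * max A 1) := by ring
      _ ≤ (1/2) * S := by linarith
      _ ≤ (1 - p) ^ (2 * N + 1) * S := mul_le_mul_of_nonneg_right hhalf hS0
  calc A * p ≤ ((1 - p) ^ (2 * N + 1) * S) * p := by
        refine mul_le_mul_of_nonneg_right (le_trans (le_max_left A 1) hxS) hp.1.le
    _ = p * (1 - p) ^ (2 * N + 1) * S := by ring
    _ ≤ ∫ u, fRoof g u ∂(μ p) := hlow

lemma tendsto_p_div_D :
    Tendsto (fun p => p / (∫ u, fRoof g u ∂(μ p))) (𝓝[>] (0:ℝ)) (𝓝 0) := by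
  have h := (tendsto_div_atTop hl hkg hgnn hprob hber).inv_tendsto_atTop
  refine h.congr fun p => ?_
  simp [Pi.inv_apply, inv_div]

end family
end Stmt14

namespace Stmt14

section susp

variable (g : ℕ → ℝ)

/-- interior points of the suspension domain -/
def IntPt (q : SingDom g) : Prop := 0 < q.1.2 ∧ q.1.2 < fRoof g q.1.1

lemma eqvGen_eq {a b : SingDom g} (h : Relation.EqvGen (singRel g) a b) :
    (IntPt g a ∨ IntPt g b) → a = b := by
  induction h with
  | rel a b hab =>
    rintro (hi | hi)
    · exact absurd hab.1 (ne_of_lt hi.2)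
    · have hb0 : b.1.2 = 0 := by rw [hab.2]
      rw [IntPt, hb0] at hi
      exact absurd hi.1 (lt_irrefl 0)
  | refl a => intro _; rfl
  | symm a b h ih => intro hi; exact (ih hi.symm).symm
  | trans a b c h1 h2 ih1 ih2 =>
    rintro (hi | hi)
    · have e := ih1 (Or.inl hi)
      have hb : IntPt g b := e ▸ hi
      rw [e]; exact ih2 (Or.inl hb)
    · have e := ih2 (Or.inr hi)
      have hb : IntPt g b := by rw [e]; exact hi
      rw [← e]; exact ih1 (Or.inr hb)

lemma eq_of_mk_eq_int {a b : SingDom g}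
    (h : Quot.mk (singRel g) a = Quot.mk (singRel g) b)
    (hi : IntPt g a ∨ IntPt g b) : a = b :=
  eqvGen_eq g (Quot.eq.mp h) hi

variable {g}
variable (hg0 : Tendsto g atTop (𝓝 0)) (hgnn : ∀ m, 0 ≤ g m) (hfnn : ∀ u, 0 ≤ fRoof g u)

/-- the clamping map -/
noncomputable def clampMap : BSeq × ℝ → BSeq × ℝ := fun p => (p.1, max 0 (min p.2 (fRoof g p.1)))

include hg0 hgnn in
lemma continuous_clampMap : Continuous (clampMap (g := g)) :=
  continuous_fst.prodMk (continuous_const.max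
    (continuous_snd.min ((fRoof_continuous hg0 hgnn).comp continuous_fst)))

include hg0 hgnn in
lemma continuous_eMap : Continuous (eMap g hfnn) := by
  refine Continuous.comp continuous_quot_mk ?_
  exact Continuous.subtype_mk (continuous_clampMap hg0 hgnn) _

include hg0 hgnn in
lemma measurable_eMap : Measurable (eMap g hfnn) := by
  refine Measurable.comp measurable_quot_mk ?_
  exact Measurable.subtype_mk (continuous_clampMap hg0 hgnn).measurable

lemma measurable_of_continuous_susp {φ : SingSusp g → ℝ} (hφ : Continuous φ) :
    Measurable φ := by
  haveI : OpensMeasurableSpace (SingDom g) := Subtype.opensMeasurableSpace _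
  intro s hs
  exact (hφ.comp continuous_quot_mk).measurable hs

lemma measurable_fRoof' (hg0 : Tendsto g atTop (𝓝 0)) (hgnn : ∀ m, 0 ≤ g m) :
    Measurable (fRoof g) := (fRoof_continuous hg0 hgnn).measurable

lemma eMap_zero : eMap g hfnn (zeroSeq, 0) = starF g := by
  refine congrArg (Quot.mk _) (Subtype.ext (Prod.ext rfl ?_))
  simp [fRoof_zeroSeq]

lemma isClosed_Ak (k : ℕ) : IsClosed (Ak k) := by
  have h : Ak k = ⋂ n : ℤ, {u : BSeq | n.natAbs ≤ k → u n = false} := by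
    ext u; simp [Ak]
  rw [h]
  refine isClosed_iInter fun n => ?_
  by_cases hn : n.natAbs ≤ k
  · have : {u : BSeq | n.natAbs ≤ k → u n = false} = (fun u : BSeq => u n) ⁻¹' {false} := by
      ext u; simp [hn]
    rw [this]
    exact (isClosed_discrete _).preimage (continuous_apply n)
  · have : {u : BSeq | n.natAbs ≤ k → u n = false} = Set.univ := by
      ext u; simp [hn]
    rw [this]; exact isClosed_univ

/-- the compact exhaustion sets -/
def Kk (g : ℕ → ℝ) (k : ℕ) : Set (BSeq × ℝ) :=
  {q : BSeq × ℝ | q.1 ∈ Ak k ∧ 0 ≤ q.2 ∧ q.2 ≤ fRoof g q.1}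

include hg0 hgnn in
lemma isClosed_Kk (k : ℕ) : IsClosed (Kk g k) := by
  have h1 : IsClosed {q : BSeq × ℝ | q.1 ∈ Ak k} :=
    (isClosed_Ak k).preimage continuous_fst
  have h2 : IsClosed {q : BSeq × ℝ | 0 ≤ q.2} :=
    isClosed_le continuous_const continuous_snd
  have h3 : IsClosed {q : BSeq × ℝ | q.2 ≤ fRoof g q.1} :=
    isClosed_le continuous_snd ((fRoof_continuous hg0 hgnn).comp continuous_fst)
  exact (h1.inter (h2.inter h3))

include hg0 hgnn in
lemma isCompact_Kk {B : ℝ} (hB : ∀ m, g m ≤ B) (hB0 : 0 ≤ B) (k : ℕ) :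
    IsCompact (Kk g k) := by
  refine IsCompact.of_isClosed_subset (IsCompact.prod isCompact_univ (isCompact_Icc (a := (0:ℝ)) (b := B)))
    (isClosed_Kk hg0 hgnn k) ?_
  rintro ⟨u, t⟩ ⟨_, ht0, htf⟩
  exact ⟨Set.mem_univ u, ht0, htf.trans (fRoof_le hB hB0 u)⟩

lemma Kk_anti {j k : ℕ} (h : j ≤ k) : Kk g k ⊆ Kk g j :=
  fun q hq => ⟨Ak_anti h hq.1, hq.2⟩

lemma iInter_Kk : (⋂ k, Kk g k) ⊆ {((zeroSeq, 0) : BSeq × ℝ)} := by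
  rintro ⟨u, t⟩ hq
  simp only [Set.mem_iInter] at hq
  have hu : u = zeroSeq := by
    refine zeroSeq_iff.mpr fun n => ?_
    exact (hq n.natAbs).1 n (le_refl _)
  have h0 := (hq 0).2
  rw [hu] at h0 ⊢
  have ht : t = 0 := le_antisymm (by simpa [fRoof_zeroSeq] using h0.2) h0.1
  rw [ht]; rfl

include hg0 hgnn in
lemma compactSpace_SingDom {B : ℝ} (hB : ∀ m, g m ≤ B) (hB0 : 0 ≤ B) :
    CompactSpace (SingDom g) := by
  have h : IsCompact {p : BSeq × ℝ | 0 ≤ p.2 ∧ p.2 ≤ fRoof g p.1} := by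
    refine IsCompact.of_isClosed_subset
      (IsCompact.prod isCompact_univ (isCompact_Icc (a := (0:ℝ)) (b := B)))
      ((isClosed_le continuous_const continuous_snd).inter
        (isClosed_le continuous_snd ((fRoof_continuous hg0 hgnn).comp continuous_fst))) ?_
    rintro ⟨u, t⟩ ⟨ht0, htf⟩
    exact ⟨Set.mem_univ u, ht0, htf.trans (fRoof_le hB hB0 u)⟩
  exact isCompact_iff_compactSpace.mp h

/-- the measurable core of the cylinder set in the suspension -/
def S1 (g : ℕ → ℝ) (k : ℕ) : Set (SingSusp g) :=
  {y | ∃ q : SingDom g, Quot.mk (singRel g) q = y ∧ IntPt g q ∧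
    ∀ n : ℤ, n.natAbs ≤ k → q.1.1 n = false}

lemma mk_preimage_S1 (k : ℕ) : Quot.mk (singRel g) ⁻¹' (S1 g k)
    = {q : SingDom g | IntPt g q ∧ ∀ n : ℤ, n.natAbs ≤ k → q.1.1 n = false} := by
  ext q
  constructor
  · rintro ⟨q', hq', hint, hbz⟩
    obtain rfl := eq_of_mk_eq_int g hq' (Or.inl hint)
    exact ⟨hint, hbz⟩
  · intro h
    exact ⟨q, rfl, h⟩

include hg0 hgnn in
lemma measurableSet_S1 (k : ℕ) : MeasurableSet (S1 g k) := by
  show MeasurableSet (Quot.mk (singRel g) ⁻¹' (S1 g k))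
  rw [mk_preimage_S1]
  have h1 : MeasurableSet {p : BSeq × ℝ | (0 < p.2 ∧ p.2 < fRoof g p.1) ∧ p.1 ∈ Ak k} := by
    refine MeasurableSet.inter (MeasurableSet.inter ?_ ?_) ?_
    · exact measurableSet_lt measurable_const measurable_snd
    · exact measurableSet_lt measurable_snd
        ((measurable_fRoof' hg0 hgnn).comp measurable_fst)
    · exact measurable_fst (measurable_Ak k)
  have h2 : {q : SingDom g | IntPt g q ∧ ∀ n : ℤ, n.natAbs ≤ k → q.1.1 n = false}
      = Subtype.val ⁻¹' {p : BSeq × ℝ | (0 < p.2 ∧ p.2 < fRoof g p.1) ∧ p.1 ∈ Ak k} := by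
    ext q
    simp only [Set.mem_setOf_eq, Set.mem_preimage, IntPt]
    exact ⟨fun h => ⟨h.1, h.2⟩, fun h => ⟨h.1, h.2⟩⟩
  rw [h2]
  exact measurable_subtype_coe h1

lemma S1_subset (k : ℕ) : S1 g k ⊆ {y : SingSusp g | ∃ q : SingDom g,
    Quot.mk (singRel g) q = y ∧ ∀ n : ℤ, n.natAbs ≤ k → q.1.1 n = false} := by
  rintro y ⟨q, hq, _, hbz⟩
  exact ⟨q, hq, hbz⟩

lemma eMap_preimage_S1 (k : ℕ) :
    {p : BSeq × ℝ | 0 ≤ p.2 ∧ p.2 < fRoof g p.1} ∩ (eMap g hfnn ⁻¹' S1 g k)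
      = {p : BSeq × ℝ | p.1 ∈ Ak k ∧ 0 < p.2 ∧ p.2 < fRoof g p.1} := by
  ext ⟨u, t⟩
  constructor
  · rintro ⟨⟨ht0, htf⟩, hS⟩
    have hcl : max 0 (min t (fRoof g u)) = t := by
      rw [min_eq_left htf.le, max_eq_right ht0]
    obtain ⟨q', hq', hint, hbz⟩ := hS
    obtain rfl := eq_of_mk_eq_int g hq' (Or.inl hint)
    rw [IntPt] at hint
    simp only [hcl] at hint hbz
    exact ⟨hbz, hint.1, htf⟩
  · rintro ⟨hak, ht0, htf⟩
    have hcl : max 0 (min t (fRoof g u)) = t := by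
      rw [min_eq_left htf.le, max_eq_right ht0.le]
    refine ⟨⟨ht0.le, htf⟩, ?_⟩
    refine ⟨⟨(u, max 0 (min t (fRoof g u))), le_max_left _ _,
      max_le (hfnn u) (min_le_right _ _)⟩, rfl, ?_, ?_⟩
    · rw [IntPt]; simp only [hcl]; exact ⟨ht0, htf⟩
    · exact hak

end susp
end Stmt14

namespace Stmt14

section prodmeas

variable {g : ℕ → ℝ} (hg0 : Tendsto g atTop (𝓝 0)) (hgnn : ∀ m, 0 ≤ g m)

/-- the fundamental domain -/
def Fset (g : ℕ → ℝ) : Set (BSeq × ℝ) := {p : BSeq × ℝ | 0 ≤ p.2 ∧ p.2 < fRoof g p.1}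

include hg0 hgnn in
lemma measurableSet_Fset : MeasurableSet (Fset g) :=
  (measurableSet_le measurable_const measurable_snd).inter
    (measurableSet_lt measurable_snd ((measurable_fRoof' hg0 hgnn).comp measurable_fst))

variable (μ : Measure BSeq) [IsProbabilityMeasure μ]

include hg0 hgnn in
lemma prod_meas_inter {s : Set BSeq} (hs : MeasurableSet s) :
    (μ.prod volume) (Fset g ∩ s ×ˢ (Set.univ : Set ℝ))
      = ENNReal.ofReal (∫ u in s, fRoof g u ∂μ) := by
  rw [Measure.prod_apply ((measurableSet_Fset hg0 hgnn).inter (hs.prod MeasurableSet.univ))]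
  have hslice : ∀ u : BSeq, (volume (Prod.mk u ⁻¹' (Fset g ∩ s ×ˢ (Set.univ : Set ℝ))))
      = s.indicator (fun u => ENNReal.ofReal (fRoof g u)) u := by
    intro u
    by_cases hu : u ∈ s
    · have : Prod.mk u ⁻¹' (Fset g ∩ s ×ˢ (Set.univ : Set ℝ)) = Set.Ico 0 (fRoof g u) := by
        ext t
        simp [Fset, hu, Set.mem_Ico, and_comm]
      rw [this, Real.volume_Ico, sub_zero, Set.indicator_of_mem hu]
    · have : Prod.mk u ⁻¹' (Fset g ∩ s ×ˢ (Set.univ : Set ℝ)) = ∅ := by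
        ext t
        simp [Fset, hu]
      rw [this, measure_empty, Set.indicator_of_notMem hu]
  rw [lintegral_congr hslice, lintegral_indicator hs,
    ← ofReal_integral_eq_lintegral_ofReal
      ((integrable_fRoof hg0 hgnn).integrableOn)
      (Filter.Eventually.of_forall (fRoof_nonneg hgnn))]

include hg0 hgnn in
lemma prod_meas_F : (μ.prod volume) (Fset g) = ENNReal.ofReal (∫ u, fRoof g u ∂μ) := by
  have h := prod_meas_inter hg0 hgnn μ MeasurableSet.univ
  rw [Set.univ_prod_univ, Set.inter_univ] at h
  rw [h, setIntegral_univ]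

include hg0 hgnn in
lemma prod_meas_Ioo {s : Set BSeq} (hs : MeasurableSet s) :
    (μ.prod volume) {p : BSeq × ℝ | p.1 ∈ s ∧ 0 < p.2 ∧ p.2 < fRoof g p.1}
      = ENNReal.ofReal (∫ u in s, fRoof g u ∂μ) := by
  have hms : MeasurableSet {p : BSeq × ℝ | p.1 ∈ s ∧ 0 < p.2 ∧ p.2 < fRoof g p.1} := by
    refine ((measurable_fst hs).inter ?_)
    exact (measurableSet_lt measurable_const measurable_snd).inter
      (measurableSet_lt measurable_snd ((measurable_fRoof' hg0 hgnn).comp measurable_fst))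
  rw [Measure.prod_apply hms]
  have hslice : ∀ u : BSeq, (volume (Prod.mk u ⁻¹' {p : BSeq × ℝ | p.1 ∈ s ∧ 0 < p.2 ∧ p.2 < fRoof g p.1}))
      = s.indicator (fun u => ENNReal.ofReal (fRoof g u)) u := by
    intro u
    by_cases hu : u ∈ s
    · have : Prod.mk u ⁻¹' {p : BSeq × ℝ | p.1 ∈ s ∧ 0 < p.2 ∧ p.2 < fRoof g p.1}
          = Set.Ioo 0 (fRoof g u) := by
        ext t; simp [hu, Set.mem_Ioo]
      rw [this, Real.volume_Ioo, sub_zero, Set.indicator_of_mem hu]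
    · have : Prod.mk u ⁻¹' {p : BSeq × ℝ | p.1 ∈ s ∧ 0 < p.2 ∧ p.2 < fRoof g p.1} = ∅ := by
        ext t; simp [hu]
      rw [this, measure_empty, Set.indicator_of_notMem hu]
  rw [lintegral_congr hslice, lintegral_indicator hs,
    ← ofReal_integral_eq_lintegral_ofReal
      ((integrable_fRoof hg0 hgnn).integrableOn)
      (Filter.Eventually.of_forall (fRoof_nonneg hgnn))]

variable (hfnn : ∀ u, 0 ≤ fRoof g u)

include hg0 hgnn in
lemma map_measure_apply {S : Set (SingSusp g)} (hS : MeasurableSet S) :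
    (((μ.prod volume).restrict (Fset g)).map (eMap g hfnn)) S
      = (μ.prod volume) (Fset g ∩ eMap g hfnn ⁻¹' S) := by
  rw [Measure.map_apply (measurable_eMap hg0 hgnn hfnn) hS,
    Measure.restrict_apply' (measurableSet_Fset hg0 hgnn), Set.inter_comm]

include hg0 hgnn in
lemma nu_S1 (k : ℕ) : singSuspMeasure g hfnn μ (S1 g k)
    = ENNReal.ofReal (∫ u in Ak k, fRoof g u ∂μ)
      / ENNReal.ofReal (∫ u, fRoof g u ∂μ) := by
  rw [singSuspMeasure]
  have hres : {p : BSeq × ℝ | 0 ≤ p.2 ∧ p.2 < fRoof g p.1} = Fset g := rfl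
  have hpre : Fset g ∩ eMap g hfnn ⁻¹' S1 g k
      = {p : BSeq × ℝ | p.1 ∈ Ak k ∧ 0 < p.2 ∧ p.2 < fRoof g p.1} := eMap_preimage_S1 hfnn k
  rw [hres, Measure.smul_apply,
    map_measure_apply hg0 hgnn μ hfnn (measurableSet_S1 hg0 hgnn k),
    hpre, prod_meas_Ioo hg0 hgnn μ (measurable_Ak k),
    smul_eq_mul, div_eq_mul_inv, mul_comm]

include hg0 hgnn in
lemma nu_univ (hD : 0 < ∫ u, fRoof g u ∂μ) :
    singSuspMeasure g hfnn μ Set.univ = 1 := by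
  rw [singSuspMeasure]
  have hres : {p : BSeq × ℝ | 0 ≤ p.2 ∧ p.2 < fRoof g p.1} = Fset g := rfl
  rw [hres, Measure.smul_apply,
    map_measure_apply hg0 hgnn μ hfnn MeasurableSet.univ]
  simp only [Set.preimage_univ, Set.inter_univ]
  rw [prod_meas_F hg0 hgnn μ, smul_eq_mul]
  exact ENNReal.inv_mul_cancel (by simpa using hD) ENNReal.ofReal_ne_top

end prodmeas
end Stmt14

namespace Stmt14

section main

variable {g : ℕ → ℝ} {l : ℝ} (hl : 0 < l) (hgpos : ∀ m, 0 < g m)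
  (hkg : Tendsto (fun k : ℕ => (k : ℝ) * g k) atTop (𝓝 l))
  (hfnn : ∀ u, 0 ≤ fRoof g u)
  {μ : ℝ → Measure BSeq} (hprob : ∀ p, IsProbabilityMeasure (μ p))
  (hber : ∀ p : ℝ, 0 < p → p < 1 → ∀ (s : Finset ℤ) (v : ℤ → Bool),
      μ p {u : BSeq | ∀ n ∈ s, u n = v n}
        = ∏ n ∈ s, ENNReal.ofReal (if v n then p else 1 - p))

include hl hgpos hkg hprob hber in
theorem part2 (k : ℕ) :
    Tendsto (fun p => singSuspMeasure g hfnn (μ p)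
        {y : SingSusp g | ∃ q : SingDom g, Quot.mk (singRel g) q = y ∧
          ∀ n : ℤ, n.natAbs ≤ k → q.1.1 n = false})
      (𝓝[>] (0 : ℝ)) (𝓝 1) := by
  have hgnn : ∀ m, 0 ≤ g m := fun m => (hgpos m).le
  have hg0 := tendsto_g_zero hkg
  obtain ⟨B0, hB0⟩ := hg0.bddAbove_range
  set B := max B0 0 with hBdef
  have hB : ∀ m, g m ≤ B := fun m => le_trans (hB0 ⟨m, rfl⟩) (le_max_left _ _)
  have hBnn : (0:ℝ) ≤ B := le_max_right _ _
  set D : ℝ → ℝ := fun p => ∫ u, fRoof g u ∂(μ p) with hDdef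
  set e : ℝ → ℝ := fun p => ∫ u in (Ak k)ᶜ, fRoof g u ∂(μ p) with hedef
  have hev1 : Set.Ioo (0:ℝ) 1 ∈ 𝓝[>] (0:ℝ) := Ioo_mem_nhdsGT_of_mem ⟨le_refl 0, one_pos⟩
  -- the quotient e/D tends to 0
  have hq0 : Tendsto (fun p => e p / D p) (𝓝[>] (0:ℝ)) (𝓝 0) := by
    have hup : Tendsto (fun p => (B * (2 * k + 1)) * (p / D p)) (𝓝[>] (0:ℝ)) (𝓝 0) := by
      have := (tendsto_p_div_D hl hkg hgnn hprob hber).const_mul (B * (2 * k + 1))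
      simpa using this
    refine tendsto_of_tendsto_of_tendsto_of_le_of_le' tendsto_const_nhds hup ?_ ?_
    · filter_upwards [hev1] with p hp
      haveI := hprob p
      have hD := D_pos hl hkg hgnn hprob hber hp.1 hp.2 hgpos
      exact div_nonneg (setIntegral_nonneg (measurable_Ak k).compl
        (fun u _ => fRoof_nonneg hgnn u)) hD.le
    · filter_upwards [hev1] with p hp
      haveI := hprob p
      have hD := D_pos hl hkg hgnn hprob hber hp.1 hp.2 hgpos
      have hle := integral_compl_Ak_le hp.1 hp.2 (hber p hp.1 hp.2) hg0 hgnn hB hBnn k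
      calc e p / D p ≤ (B * ((2 * k + 1) * p)) / D p := by
            exact div_le_div_of_nonneg_right (c := D p) hle hD.le
        _ = (B * (2 * k + 1)) * (p / D p) := by ring
  have hL : Tendsto (fun p => ENNReal.ofReal (1 - e p / D p)) (𝓝[>] (0:ℝ))
      (𝓝 1) := by
    have h1 : Tendsto (fun p => 1 - e p / D p) (𝓝[>] (0:ℝ)) (𝓝 1) := by
      have := tendsto_const_nhds (α := ℝ) (x := (1:ℝ)) (f := 𝓝[>] (0:ℝ)) |>.sub hq0
      simpa using this
    have := (ENNReal.continuous_ofReal.tendsto 1).comp h1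
    simpa [Function.comp_def] using this
  refine tendsto_of_tendsto_of_tendsto_of_le_of_le' hL tendsto_const_nhds ?_ ?_
  · -- lower bound
    filter_upwards [hev1] with p hp
    haveI := hprob p
    have hD := D_pos hl hkg hgnn hprob hber hp.1 hp.2 hgpos
    have hnuS1 := nu_S1 hg0 hgnn (μ p) hfnn k
    have hsplit : ∫ u in Ak k, fRoof g u ∂(μ p) = D p - e p := by
      have := integral_add_compl (measurable_Ak k) (integrable_fRoof hg0 hgnn (μ := μ p))
      rw [hDdef, hedef]; simp only; linarith
    have hdiv : ENNReal.ofReal (1 - e p / D p)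
        = ENNReal.ofReal (∫ u in Ak k, fRoof g u ∂(μ p)) / ENNReal.ofReal (D p) := by
      rw [hsplit, ← ENNReal.ofReal_div_of_pos hD]
      congr 1
      field_simp
      have hD' : D p ≠ 0 := hD.ne'
      show (1 - e p / D p) * D p = D p - e p
      rw [sub_mul, one_mul, div_mul_cancel₀ _ hD']
    rw [hdiv, ← hnuS1]
    exact measure_mono (S1_subset k)
  · -- upper bound
    filter_upwards [hev1] with p hp
    haveI := hprob p
    have hD := D_pos hl hkg hgnn hprob hber hp.1 hp.2 hgpos
    rw [← nu_univ hg0 hgnn (μ p) hfnn hD]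
    exact measure_mono (Set.subset_univ _)

end main
end Stmt14

namespace Stmt14

section main1

variable {g : ℕ → ℝ} {l : ℝ} (hl : 0 < l) (hgpos : ∀ m, 0 < g m)
  (hkg : Tendsto (fun k : ℕ => (k : ℝ) * g k) atTop (𝓝 l))
  (hfnn : ∀ u, 0 ≤ fRoof g u)
  {μ : ℝ → Measure BSeq} (hprob : ∀ p, IsProbabilityMeasure (μ p))
  (hber : ∀ p : ℝ, 0 < p → p < 1 → ∀ (s : Finset ℤ) (v : ℤ → Bool),
      μ p {u : BSeq | ∀ n ∈ s, u n = v n}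
        = ∏ n ∈ s, ENNReal.ofReal (if v n then p else 1 - p))

include hl hgpos hkg hprob hber in
theorem part1 (φ : SingSusp g → ℝ) (hφ : Continuous φ) :
    Tendsto (fun p => ∫ y, φ y ∂(singSuspMeasure g hfnn (μ p))) (𝓝[>] (0 : ℝ))
      (𝓝 (φ (starF g))) := by
  have hgnn : ∀ m, 0 ≤ g m := fun m => (hgpos m).le
  have hg0 := tendsto_g_zero hkg
  obtain ⟨B0, hB0⟩ := hg0.bddAbove_range
  set B := max B0 0 with hBdef
  have hB : ∀ m, g m ≤ B := fun m => le_trans (hB0 ⟨m, rfl⟩) (le_max_left _ _)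
  have hBnn : (0:ℝ) ≤ B := le_max_right _ _
  set ψ₀ : ℝ := φ (starF g) with hψ₀def
  set Φ : BSeq × ℝ → ℝ := fun x => φ (eMap g hfnn x) with hΦdef
  have hΦcont : Continuous Φ := hφ.comp (continuous_eMap hg0 hgnn hfnn)
  -- global bound on Φ and ψ₀
  haveI := compactSpace_SingDom hg0 hgnn hB hBnn
  have hΨcont : Continuous (fun q : SingDom g => φ (Quot.mk (singRel g) q)) :=
    hφ.comp continuous_quot_mk
  obtain ⟨C, hC⟩ : ∃ C : ℝ, ∀ q : SingDom g, |φ (Quot.mk (singRel g) q)| ≤ C := by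
    obtain ⟨C, hC⟩ := (isCompact_range (continuous_abs.comp hΨcont)).bddAbove
    exact ⟨C, fun q => hC ⟨q, rfl⟩⟩
  have hΦC : ∀ x : BSeq × ℝ, |Φ x| ≤ C := fun x =>
    hC ⟨(x.1, max 0 (min x.2 (fRoof g x.1))), le_max_left _ _,
      max_le (hfnn x.1) (min_le_right _ _)⟩
  have hψ₀C : |ψ₀| ≤ C := hC ⟨(zeroSeq, 0), le_refl 0, by simp [fRoof_zeroSeq]⟩
  have hCnn : (0:ℝ) ≤ C := le_trans (abs_nonneg _) hψ₀C
  rw [Metric.tendsto_nhds]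
  intro ε hε
  -- choose k using compactness
  obtain ⟨k, hk⟩ : ∃ k, Kk g k ⊆ Φ ⁻¹' (Metric.ball ψ₀ (ε/2)) := by
    refine exists_subset_nhds_of_isCompact'
      (fun i j => ⟨max i j, Kk_anti (le_max_left _ _), Kk_anti (le_max_right _ _)⟩)
      (fun k => isCompact_Kk hg0 hgnn hB hBnn k)
      (fun k => isClosed_Kk hg0 hgnn k) ?_
    intro x hx
    have hx' : x = (zeroSeq, 0) := iInter_Kk hx
    subst hx'
    refine IsOpen.mem_nhds (Metric.isOpen_ball.preimage hΦcont) ?_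
    show Φ (zeroSeq, 0) ∈ Metric.ball ψ₀ (ε/2)
    have : Φ (zeroSeq, 0) = ψ₀ := by rw [hΦdef]; simp only; rw [eMap_zero hfnn]
    rw [this]
    exact Metric.mem_ball_self (by linarith)
  -- eventual smallness of the error term
  have herr : ∀ᶠ p in 𝓝[>] (0:ℝ),
      (2 * C * (B * (2 * k + 1))) * (p / (∫ u, fRoof g u ∂(μ p))) < ε / 2 := by
    have h0 := (tendsto_p_div_D hl hkg hgnn hprob hber).const_mul (2 * C * (B * (2 * k + 1)))
    rw [mul_zero] at h0
    exact h0.eventually (eventually_lt_nhds (by linarith))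
  have hev1 : Set.Ioo (0:ℝ) 1 ∈ 𝓝[>] (0:ℝ) := Ioo_mem_nhdsGT_of_mem ⟨le_refl 0, one_pos⟩
  filter_upwards [hev1, herr] with p hp herrp
  haveI := hprob p
  set D : ℝ := ∫ u, fRoof g u ∂(μ p) with hDdef
  have hD : 0 < D := D_pos hl hkg hgnn hprob hber hp.1 hp.2 hgpos
  set m : Measure (BSeq × ℝ) := (μ p).prod volume with hmdef
  set F : Set (BSeq × ℝ) := Fset g with hFdef
  set G : Set (BSeq × ℝ) := F ∩ (Ak k ×ˢ (Set.univ : Set ℝ)) with hGdef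
  have hmF : m F = ENNReal.ofReal D := prod_meas_F hg0 hgnn (μ p)
  have hmG : m G = ENNReal.ofReal (∫ u in Ak k, fRoof g u ∂(μ p)) :=
    prod_meas_inter hg0 hgnn (μ p) (measurable_Ak k)
  have hFdiff : F \ (Ak k ×ˢ (Set.univ : Set ℝ)) = F ∩ ((Ak k)ᶜ ×ˢ (Set.univ : Set ℝ)) := by
    ext ⟨u, t⟩
    simp [Set.mem_diff, Set.mem_prod]
  have hmFG : m (F \ (Ak k ×ˢ (Set.univ : Set ℝ)))
      = ENNReal.ofReal (∫ u in (Ak k)ᶜ, fRoof g u ∂(μ p)) := by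
    rw [hFdiff]
    exact prod_meas_inter hg0 hgnn (μ p) (measurable_Ak k).compl
  -- rewrite the integral
  have hmeasF : MeasurableSet F := measurableSet_Fset hg0 hgnn
  haveI hfin : IsFiniteMeasure (m.restrict F) := by
    constructor
    rw [Measure.restrict_apply_univ, hmF]
    exact ENNReal.ofReal_lt_top
  have hΦint : Integrable Φ (m.restrict F) := by
    refine (integrable_const C).mono' hΦcont.aestronglyMeasurable ?_
    filter_upwards with x using (Real.norm_eq_abs _ ▸ hΦC x)
  have hIeq : ∫ y, φ y ∂(singSuspMeasure g hfnn (μ p)) = D⁻¹ * ∫ x in F, Φ x ∂m := by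
    rw [singSuspMeasure, integral_smul_measure]
    rw [integral_map (measurable_eMap hg0 hgnn hfnn).aemeasurable
      (measurable_of_continuous_susp hφ).aestronglyMeasurable]
    rw [ENNReal.toReal_inv, ENNReal.toReal_ofReal hD.le]
    rfl
  -- decompose F
  have hmeast : MeasurableSet (Ak k ×ˢ (Set.univ : Set ℝ)) :=
    (measurable_Ak k).prod MeasurableSet.univ
  have hsplit : ∫ x in G, Φ x ∂m + ∫ x in F \ (Ak k ×ˢ (Set.univ : Set ℝ)), Φ x ∂m
      = ∫ x in F, Φ x ∂m := by
    rw [hGdef]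
    exact integral_inter_add_diff hmeast hΦint
  -- toReal measures
  have htG : (m G).toReal = ∫ u in Ak k, fRoof g u ∂(μ p) := by
    rw [hmG, ENNReal.toReal_ofReal
      (setIntegral_nonneg (measurable_Ak k) fun u _ => fRoof_nonneg hgnn u)]
  have htFG : (m (F \ (Ak k ×ˢ (Set.univ : Set ℝ)))).toReal
      = ∫ u in (Ak k)ᶜ, fRoof g u ∂(μ p) := by
    rw [hmFG, ENNReal.toReal_ofReal
      (setIntegral_nonneg (measurable_Ak k).compl fun u _ => fRoof_nonneg hgnn u)]
  have hDsum : (m G).toReal + (m (F \ (Ak k ×ˢ (Set.univ : Set ℝ)))).toReal = D := by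
    rw [htG, htFG, hDdef]
    exact integral_add_compl (measurable_Ak k) (integrable_fRoof hg0 hgnn (μ := μ p))
  -- bounds on pieces
  have hGfin : m G < ∞ := by rw [hmG]; exact ENNReal.ofReal_lt_top
  have hFGfin : m (F \ (Ak k ×ˢ (Set.univ : Set ℝ))) < ∞ := by
    rw [hmFG]; exact ENNReal.ofReal_lt_top
  haveI hfinG : IsFiniteMeasure (m.restrict G) :=
    ⟨by rw [Measure.restrict_apply_univ]; exact hGfin⟩
  haveI hfinFG : IsFiniteMeasure (m.restrict (F \ (Ak k ×ˢ (Set.univ : Set ℝ)))) :=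
    ⟨by rw [Measure.restrict_apply_univ]; exact hFGfin⟩
  have hest1 : |∫ x in G, Φ x ∂m - ψ₀ * (m G).toReal| ≤ (ε/2) * (m G).toReal := by
    have hsub : ∫ x in G, Φ x ∂m - ψ₀ * (m G).toReal = ∫ x in G, (Φ x - ψ₀) ∂m := by
      rw [integral_sub (hΦint.mono_measure (Measure.restrict_mono Set.inter_subset_left le_rfl))
        (integrable_const ψ₀), setIntegral_const, smul_eq_mul, mul_comm]
      rfl
    rw [hsub, ← Real.norm_eq_abs]
    refine norm_setIntegral_le_of_norm_le_const hGfin fun x hx => ?_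
    have hxK : x ∈ Kk g k := ⟨hx.2.1, hx.1.1, (hx.1.2).le⟩
    have := hk hxK
    rw [Set.mem_preimage, Metric.mem_ball, dist_eq_norm] at this
    exact this.le
  have hest2 : |∫ x in F \ (Ak k ×ˢ (Set.univ : Set ℝ)), Φ x ∂m
      - ψ₀ * (m (F \ (Ak k ×ˢ (Set.univ : Set ℝ)))).toReal|
      ≤ (2*C) * (m (F \ (Ak k ×ˢ (Set.univ : Set ℝ)))).toReal := by
    have hsub : ∫ x in F \ (Ak k ×ˢ (Set.univ : Set ℝ)), Φ x ∂m
        - ψ₀ * (m (F \ (Ak k ×ˢ (Set.univ : Set ℝ)))).toReal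
        = ∫ x in F \ (Ak k ×ˢ (Set.univ : Set ℝ)), (Φ x - ψ₀) ∂m := by
      rw [integral_sub (hΦint.mono_measure (Measure.restrict_mono Set.diff_subset le_rfl))
        (integrable_const ψ₀), setIntegral_const, smul_eq_mul, mul_comm]
      rfl
    rw [hsub, ← Real.norm_eq_abs]
    refine norm_setIntegral_le_of_norm_le_const hFGfin fun x _ => ?_
    rw [Real.norm_eq_abs]
    calc |Φ x - ψ₀| ≤ |Φ x| + |ψ₀| := abs_sub _ _
      _ ≤ C + C := add_le_add (hΦC x) hψ₀C
      _ = 2*C := by ring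
  -- error bound on the complementary integral
  have hcompl : ∫ u in (Ak k)ᶜ, fRoof g u ∂(μ p) ≤ B * ((2*k+1) * p) :=
    integral_compl_Ak_le hp.1 hp.2 (hber p hp.1 hp.2) hg0 hgnn hB hBnn k
  have hGleD : (m G).toReal ≤ D := by
    rw [htG, hDdef]
    exact setIntegral_le_integral (integrable_fRoof hg0 hgnn (μ := μ p))
      (Filter.Eventually.of_forall (fRoof_nonneg hgnn))
  -- final assembly
  rw [Real.dist_eq, hIeq]
  have hkey : |D⁻¹ * ∫ x in F, Φ x ∂m - ψ₀|
      ≤ D⁻¹ * ((ε/2) * (m G).toReal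
        + (2*C) * (m (F \ (Ak k ×ˢ (Set.univ : Set ℝ)))).toReal) := by
    have h1 : D⁻¹ * ∫ x in F, Φ x ∂m - ψ₀ = D⁻¹ * ((∫ x in F, Φ x ∂m) - ψ₀ * D) := by
      field_simp
    rw [h1, abs_mul, abs_of_nonneg (inv_nonneg.mpr hD.le)]
    refine mul_le_mul_of_nonneg_left ?_ (inv_nonneg.mpr hD.le)
    have h2 : (∫ x in F, Φ x ∂m) - ψ₀ * D
        = (∫ x in G, Φ x ∂m - ψ₀ * (m G).toReal)
          + (∫ x in F \ (Ak k ×ˢ (Set.univ : Set ℝ)), Φ x ∂m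
            - ψ₀ * (m (F \ (Ak k ×ˢ (Set.univ : Set ℝ)))).toReal) := by
      rw [← hsplit, ← hDsum]; ring
    rw [h2]
    exact (abs_add_le _ _).trans (add_le_add hest1 hest2)
  have hbound : D⁻¹ * ((ε/2) * (m G).toReal
      + (2*C) * (m (F \ (Ak k ×ˢ (Set.univ : Set ℝ)))).toReal) < ε := by
    have hpos2 : (m (F \ (Ak k ×ˢ (Set.univ : Set ℝ)))).toReal ≤ B * ((2*k+1) * p) := by
      rw [htFG]; exact hcompl
    have hnn2 : 0 ≤ (m (F \ (Ak k ×ˢ (Set.univ : Set ℝ)))).toReal := ENNReal.toReal_nonneg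
    have step1 : D⁻¹ * ((ε/2) * (m G).toReal) ≤ ε/2 := by
      rw [mul_comm (ε/2), ← mul_assoc]
      calc D⁻¹ * (m G).toReal * (ε/2) ≤ D⁻¹ * D * (ε/2) := by
            refine mul_le_mul_of_nonneg_right
              (mul_le_mul_of_nonneg_left hGleD (inv_nonneg.mpr hD.le)) (by linarith)
        _ = ε/2 := by field_simp
    have step2 : D⁻¹ * ((2*C) * (m (F \ (Ak k ×ˢ (Set.univ : Set ℝ)))).toReal)
        < ε/2 := by
      calc D⁻¹ * ((2*C) * (m (F \ (Ak k ×ˢ (Set.univ : Set ℝ)))).toReal)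
          ≤ D⁻¹ * ((2*C) * (B * ((2*k+1) * p))) := by
            refine mul_le_mul_of_nonneg_left
              (mul_le_mul_of_nonneg_left hpos2 (by linarith)) (inv_nonneg.mpr hD.le)
        _ = (2 * C * (B * (2 * k + 1))) * (p / D) := by
            push_cast; field_simp
        _ < ε/2 := herrp
    calc D⁻¹ * ((ε/2) * (m G).toReal
        + (2*C) * (m (F \ (Ak k ×ˢ (Set.univ : Set ℝ)))).toReal)
        = D⁻¹ * ((ε/2) * (m G).toReal)
          + D⁻¹ * ((2*C) * (m (F \ (Ak k ×ˢ (Set.univ : Set ℝ)))).toReal) := by ring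
      _ < ε/2 + ε/2 := by
          refine add_lt_add_of_le_of_lt step1 step2
      _ = ε := by ring
  exact lt_of_le_of_lt hkey hbound

end main1
end Stmt14

/-- for the Bernoulli measures `μ_λ` and the roof `f(u) = g(k_u)` with
`k g(k) → l ∈ (0,∞)`, as `λ → 0` the suspension-flow measures `ν_{μ_λ}` converge
weakly to the Dirac mass at the singularity `*^f`; in particular, for each fixed `k`,
`ν_{μ_λ}([0^{2k+1}] × ℝ/∼) → 1` as `λ → 0`. -/
theorem stmt_14 (g : ℕ → ℝ) (l : ℝ) (hl : 0 < l) (hgpos : ∀ k, 0 < g k)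
    (hkg : Tendsto (fun k : ℕ => (k : ℝ) * g k) atTop (𝓝 l))
    (hfnn : ∀ u, 0 ≤ fRoof g u)
    (μ : ℝ → Measure BSeq) (hprob : ∀ p, IsProbabilityMeasure (μ p))
    (hber : ∀ p : ℝ, 0 < p → p < 1 → ∀ (s : Finset ℤ) (v : ℤ → Bool),
      μ p {u : BSeq | ∀ n ∈ s, u n = v n}
        = ∏ n ∈ s, ENNReal.ofReal (if v n then p else 1 - p)) :
    (∀ φ : SingSusp g → ℝ, Continuous φ →
      Tendsto (fun p => ∫ y, φ y ∂(singSuspMeasure g hfnn (μ p))) (𝓝[>] (0 : ℝ))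
        (𝓝 (φ (starF g)))) ∧
    ∀ k : ℕ, Tendsto (fun p => singSuspMeasure g hfnn (μ p)
        {y : SingSusp g | ∃ q : SingDom g, Quot.mk (singRel g) q = y ∧
          ∀ n : ℤ, n.natAbs ≤ k → q.1.1 n = false})
      (𝓝[>] (0 : ℝ)) (𝓝 1) := by
  constructor
  · intro φ hφ
    exact Stmt14.part1 hl hgpos hkg hfnn hprob hber φ hφ
  · intro k
    exact Stmt14.part2 hl hgpos hkg hfnn hprob hber k
end

section
/- In the setting of the map S on {0,1}^ℤ (with L as defined by the four regions), for x with x₀ = 1 and 3 ≤ k_x⁺ < ∞, with r as in the structure lemma and p = p_x the return time, there exist ε_{r+1},…,ε_{p-2} ∈ {0,1} depending only on k_x⁺ such that for r < q < p: k⁺_{S^q x} = 2^{p-1-q} + Σ_{0 ≤ i < p-q-1} ε_{q+i} 2^i; and furthermore p - 2 - r ≤ ⌈p/2⌉ - 1. -/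
open Filter Topology


open Filter Topology

/-- `k⁺_x = min {n ≥ 1 : x_n = 1}`. -/
noncomputable def kplus (u : BSeq) : ℕ := sInf {n : ℕ | 0 < n ∧ u (n : ℤ) = true}

/-- `k⁻_x = min {n ≥ 0 : x_{-n} = 1}`. -/
noncomputable def kminus (u : BSeq) : ℕ := sInf {n : ℕ | u (-(n : ℤ)) = true}

/-- The jump function `L(k⁻,k⁺)`, defined piecewise according to the four regions
`R₁ = {k⁻ = 0}`, `R₂ = {0 < k⁻ ≤ k⁺/3}`, `R₃ = {k⁺ > k⁻ > k⁺/3 > 0}`,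
`R₄ = {0 < k⁺ ≤ k⁻}`. -/
def Lfun (km kp : ℕ) : ℕ :=
  if km = 0 then 1
  else if 3 * km ≤ kp then km
  else if km < kp then kp - (km + kp) ^ 2 / (8 * km)
  else (kp + 1) / 2

/-- The accelerated map `S x = σ^{L(k_x)} x`. -/
noncomputable def Smap (u : BSeq) : BSeq := shiftMap^[Lfun (kminus u) (kplus u)] u

/-- The first-return time `p_x = min {n ≥ 1 : (Sⁿx)₀ = 1}`. -/
noncomputable def retTime (x : BSeq) : ℕ := sInf {n : ℕ | 0 < n ∧ (Smap^[n] x) 0 = true}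

/-- `(k⁻,k⁺) ∈ R₂`, i.e. `0 < k⁻ ≤ k⁺/3`. -/
def inR2 (km kp : ℕ) : Prop := 0 < km ∧ 3 * km ≤ kp

/-- `(k⁻,k⁺) ∈ R₃`, i.e. `k⁺ > k⁻ > k⁺/3 > 0`. -/
def inR3 (km kp : ℕ) : Prop := 0 < kp ∧ km < kp ∧ kp < 3 * km

/-- `(k⁻,k⁺) ∈ R₄`, i.e. `0 < k⁺ ≤ k⁻`. -/
def inR4 (km kp : ℕ) : Prop := 0 < kp ∧ kp ≤ km

/-- The structural property of the index `r`: before `r` the iterates are in region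
`R₂`, at `r` in `R₃`, and strictly between `r` and `p_x` in `R₄`. -/
def Core (x : BSeq) (r : ℕ) : Prop :=
  0 < r ∧ r < retTime x ∧
  (∀ q, 1 ≤ q → q < r → inR2 (kminus (Smap^[q] x)) (kplus (Smap^[q] x))) ∧
  inR3 (kminus (Smap^[r] x)) (kplus (Smap^[r] x)) ∧
  (∀ q, r < q → q ≤ retTime x - 1 → inR4 (kminus (Smap^[q] x)) (kplus (Smap^[q] x)))


-- aux lemmas
lemma shift_iter (u : BSeq) (c : ℕ) (n : ℤ) : (shiftMap^[c] u) n = u (n + c) := by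
  induction c generalizing n with
  | zero => simp
  | succ c ih =>
    rw [Function.iterate_succ_apply']
    show (shiftMap^[c] u) (n + 1) = u (n + (c + 1 : ℕ))
    rw [ih]; congr 1; push_cast; ring

lemma kplus_eq_of {u : BSeq} {b : ℕ} (hb : 0 < b) (h1 : u (b : ℤ) = true)
    (h2 : ∀ m : ℕ, 0 < m → m < b → u (m : ℤ) = false) : kplus u = b := by
  unfold kplus
  have hmem : b ∈ {n : ℕ | 0 < n ∧ u (n : ℤ) = true} := ⟨hb, h1⟩
  have h3 := Nat.sInf_mem ⟨b, hmem⟩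
  have h4 := Nat.sInf_le hmem
  rcases lt_or_eq_of_le h4 with h | h
  · simp only [Set.mem_setOf_eq] at h3
    exact absurd h3.2 (by simp [h2 _ h3.1 h])
  · exact h

lemma kminus_eq_of {u : BSeq} {a : ℕ} (h1 : u (-(a : ℤ)) = true)
    (h2 : ∀ m : ℕ, m < a → u (-(m : ℤ)) = false) : kminus u = a := by
  unfold kminus
  have hmem : a ∈ {n : ℕ | u (-(n : ℤ)) = true} := h1
  have h3 := Nat.sInf_mem ⟨a, hmem⟩
  have h4 := Nat.sInf_le hmem
  rcases lt_or_eq_of_le h4 with h | h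
  · simp only [Set.mem_setOf_eq] at h3
    exact absurd h3 (by simp [h2 _ h])
  · exact h

lemma kplus_spec {u : BSeq} (h : ∃ n : ℕ, 0 < n ∧ u (n : ℤ) = true) :
    0 < kplus u ∧ u ((kplus u : ℕ) : ℤ) = true ∧
      ∀ m : ℕ, 0 < m → m < kplus u → u (m : ℤ) = false := by
  have hne : {n : ℕ | 0 < n ∧ u (n : ℤ) = true}.Nonempty := h
  have h3 := Nat.sInf_mem hne
  simp only [Set.mem_setOf_eq] at h3
  refine ⟨h3.1, h3.2, fun m hm hml => ?_⟩
  by_contra hc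
  have hmem : m ∈ {n : ℕ | 0 < n ∧ u (n : ℤ) = true} := ⟨hm, by simpa using hc⟩
  exact absurd (Nat.sInf_le hmem) (not_le.2 hml)

lemma Lfun_pos_le {km kp : ℕ} (hkp : 0 < kp) : 0 < Lfun km kp ∧ Lfun km kp ≤ kp := by
  unfold Lfun
  split_ifs with h1 h2 h3
  · omega
  · constructor <;> omega
  · have hkm : 0 < km := Nat.pos_of_ne_zero h1
    have key : (km + kp) ^ 2 < kp * (8 * km) := by
      push_neg at h2
      zify
      nlinarith [mul_pos (show (0:ℤ) < (kp:ℤ) - km by omega)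
        (show (0:ℤ) < 3 * (km:ℤ) - kp by omega)]
    have hD : (km + kp) ^ 2 / (8 * km) < kp := (Nat.div_lt_iff_lt_mul (by positivity)).2 key
    exact ⟨Nat.sub_pos_of_lt hD, Nat.sub_le _ _⟩
  · omega

def cseq (k : ℕ) : ℕ → ℕ
  | 0 => 0
  | q + 1 => cseq k q + Lfun (cseq k q) (k - cseq k q)

lemma cseq_succ_eq (k q : ℕ) : cseq k (q + 1) = cseq k q + Lfun (cseq k q) (k - cseq k q) := rfl

lemma Lfun_top (k : ℕ) (hk : 0 < k) : Lfun k 0 = 0 := by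
  unfold Lfun; rw [if_neg (by omega), if_neg (by omega), if_neg (by omega)]

lemma cseq_le {k : ℕ} (hk : 0 < k) : ∀ q, cseq k q ≤ k := by
  intro q
  induction q with
  | zero => simp [cseq]
  | succ q ih =>
    rw [cseq_succ_eq]
    rcases eq_or_lt_of_le ih with h | h
    · rw [h]; simp [Lfun_top k hk]
    · have := (Lfun_pos_le (km := cseq k q) (show 0 < k - cseq k q by omega)).2
      omega

lemma cseq_ge {k : ℕ} (hk : 0 < k) : ∀ q, min q k ≤ cseq k q := by
  intro q
  induction q with
  | zero => simp
  | succ q ih =>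
    rw [cseq_succ_eq]
    rcases eq_or_lt_of_le (cseq_le hk q) with h | h
    · rw [h]; omega
    · have := (Lfun_pos_le (km := cseq k q) (show 0 < k - cseq k q by omega)).1
      omega

lemma cseq_hits {k : ℕ} (hk : 0 < k) : cseq k k = k := by
  have h1 := cseq_le hk k
  have h2 := cseq_ge hk k
  omega

lemma shift_kminus {x : BSeq} {k c : ℕ} (hx0 : x 0 = true)
    (hxm : ∀ m : ℕ, 0 < m → m < k → x (m : ℤ) = false) (hc : c < k) :
    kminus (shiftMap^[c] x) = c := by
  apply kminus_eq_of
  · rw [shift_iter, show (-(c:ℤ) + c) = 0 by ring]; exact hx0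
  · intro m hm
    rw [shift_iter, show (-(m:ℤ) + c) = ((c - m : ℕ) : ℤ) by omega]
    exact hxm _ (by omega) (by omega)

lemma shift_kplus {x : BSeq} {k c : ℕ} (hxk : x (k : ℤ) = true)
    (hxm : ∀ m : ℕ, 0 < m → m < k → x (m : ℤ) = false) (hc : c < k) :
    kplus (shiftMap^[c] x) = k - c := by
  apply kplus_eq_of (by omega)
  · rw [shift_iter, show (((k - c : ℕ) : ℤ) + c) = (k : ℤ) by omega]; exact hxk
  · intro m hm hmb
    rw [shift_iter, show ((m : ℤ) + c) = ((m + c : ℕ) : ℤ) by omega]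
    exact hxm _ (by omega) (by omega)

lemma bits_sum {n M : ℕ} (h1 : 2 ^ n ≤ M) (h2 : M < 2 ^ (n + 1)) :
    M = 2 ^ n + ∑ i ∈ Finset.range n, M / 2 ^ i % 2 * 2 ^ i := by
  have key : ∀ m, ∑ i ∈ Finset.range m, M / 2 ^ i % 2 * 2 ^ i = M % 2 ^ m := by
    intro m
    induction m with
    | zero => simp [Nat.mod_one]
    | succ m ih => rw [Finset.sum_range_succ, ih, pow_succ, Nat.mod_mul]; ring
  rw [key]
  have h3 : 2 ^ (n + 1) = 2 ^ n * 2 := pow_succ 2 n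
  have h4 : M % 2 ^ n = M - 2 ^ n := by
    rw [Nat.mod_eq_sub_mod h1, Nat.mod_eq_of_lt (by omega)]
  omega

lemma R3_key {km kp : ℕ} (h2 : km < kp) (h3 : kp < 3 * km) :
    (km + kp) ^ 2 < kp * (8 * km) := by
  zify
  nlinarith [mul_pos (show (0:ℤ) < (kp:ℤ) - km by omega)
    (show (0:ℤ) < 3 * (km:ℤ) - kp by omega)]


/-- for each `k ≥ 3` there are bits `ε_i ∈ {0,1}` depending only on
`k = k_x⁺` such that for every `x` with `x₀ = 1`, `k_x⁺ = k` and `r` as in the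
structure lemma (statement 16), for `r < q < p_x`:
`k⁺_{S^q x} = 2^{p_x-1-q} + Σ_{0 ≤ i < p_x-q-1} ε_{q+i} 2^i`;
and furthermore `p_x - 2 - r ≤ ⌈p_x/2⌉ - 1`. -/
theorem stmt_17 (k : ℕ) (hk : 3 ≤ k) :
    ∃ ε : ℕ → ℕ, (∀ i, ε i ≤ 1) ∧
      ∀ x : BSeq, x 0 = true → (∃ n : ℕ, 0 < n ∧ x (n : ℤ) = true) → kplus x = k →
        ∀ r : ℕ, Core x r →
          (∀ q, r < q → q < retTime x →
            kplus (Smap^[q] x)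
              = 2 ^ (retTime x - 1 - q) +
                ∑ i ∈ Finset.range (retTime x - q - 1), ε (q + i) * 2 ^ i) ∧
          retTime x - 2 - r ≤ (retTime x + 1) / 2 - 1 := by
  refine ⟨fun i => k ^ 2 / 2 ^ (Nat.log 2 k + 2) / 2 ^ (i - Nat.log 2 k - 1) % 2,
    fun i => Nat.le_of_lt_succ (Nat.mod_lt _ (by norm_num)), ?_⟩
  intro x hx0 hex hkx r hcore
  obtain ⟨-, hxk, hxm⟩ := kplus_spec hex
  rw [hkx] at hxk hxm
  have hkpos : 0 < k := by omega
  -- the hitting time p of the cumulative-shift sequence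
  have hPne : {q : ℕ | cseq k q = k}.Nonempty := ⟨k, cseq_hits hkpos⟩
  set p := sInf {q : ℕ | cseq k q = k} with hpdef
  have hpmem : cseq k p = k := Nat.sInf_mem hPne
  have hplt : ∀ q, q < p → cseq k q < k := by
    intro q hq
    rcases eq_or_lt_of_le (cseq_le hkpos q) with h | h
    · exact absurd (Nat.sInf_le (show q ∈ {q | cseq k q = k} from h)) (by omega)
    · exact h
  have hppos : 0 < p := by
    rcases Nat.eq_zero_or_pos p with h | h
    · exfalso; rw [h] at hpmem; simp [cseq] at hpmem; omega
    · exact h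
  have hc1 : cseq k 1 = 1 := by simp [cseq, Lfun]
  have hcmono : Monotone (cseq k) := monotone_nat_of_le_succ (fun q => Nat.le_add_right _ _)
  -- orbit identification
  have horb : ∀ q, q ≤ p → Smap^[q] x = shiftMap^[cseq k q] x := by
    intro q hq
    induction q with
    | zero => simp [cseq]
    | succ q ih =>
      have hq' : q < p := by omega
      have hc : cseq k q < k := hplt q hq'
      rw [Function.iterate_succ_apply', ih (by omega)]
      show Smap (shiftMap^[cseq k q] x) = _
      unfold Smap
      rw [shift_kminus hx0 hxm hc, shift_kplus hxk hxm hc, ← Function.iterate_add_apply,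
        cseq_succ_eq, Nat.add_comm (Lfun (cseq k q) (k - cseq k q)) (cseq k q)]
  -- retTime = p
  have hret : retTime x = p := by
    have hmem' : p ∈ {n : ℕ | 0 < n ∧ (Smap^[n] x) 0 = true} := by
      refine ⟨hppos, ?_⟩
      rw [horb p le_rfl, shift_iter,
        show ((0:ℤ) + ((cseq k p : ℕ) : ℤ)) = ((k : ℕ) : ℤ) by rw [hpmem]; ring]
      exact hxk
    refine le_antisymm (Nat.sInf_le hmem') ?_
    by_contra hlt
    push_neg at hlt
    have h5 : 0 < retTime x ∧ (Smap^[retTime x] x) 0 = true := Nat.sInf_mem ⟨p, hmem'⟩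
    obtain ⟨h51, h52⟩ := h5
    have hle : cseq k 1 ≤ cseq k (retTime x) := hcmono h51
    rw [horb _ hlt.le, shift_iter,
      show ((0:ℤ) + ((cseq k (retTime x) : ℕ) : ℤ)) = ((cseq k (retTime x) : ℕ) : ℤ) by ring,
      hxm _ (by omega) (hplt _ hlt)] at h52
    exact Bool.noConfusion h52
  obtain ⟨hr0, hrp, hR2, hR3, hR4⟩ := hcore
  unfold inR2 at hR2
  unfold inR3 at hR3
  unfold inR4 at hR4
  rw [hret] at hrp hR4
  -- powers of two along region R2
  have hpow : ∀ q, q ≤ r → 1 ≤ q → cseq k q = 2 ^ (q - 1) := by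
    intro q
    induction q with
    | zero => omega
    | succ q ih =>
      intro hle h1
      rcases Nat.eq_zero_or_pos q with h | h
      · subst h; simpa using hc1
      · have hcq := ih (by omega) h
        have hcqk : cseq k q < k := hplt q (by omega)
        have hR2q := hR2 q h (by omega)
        rw [horb q (by omega), shift_kminus hx0 hxm hcqk, shift_kplus hxk hxm hcqk] at hR2q
        rw [cseq_succ_eq]
        have hLv : Lfun (cseq k q) (k - cseq k q) = cseq k q := by
          unfold Lfun
          rw [if_neg (by omega), if_pos hR2q.2]
        have e : 2 ^ q = 2 ^ (q - 1) * 2 := by rw [← pow_succ]; congr 1; omega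
        rw [hLv, hcq, show q + 1 - 1 = q from rfl]
        omega
  obtain ⟨s, rfl⟩ : ∃ s, r = s + 1 := ⟨r - 1, by omega⟩
  have hcr : cseq k (s + 1) = 2 ^ s := by simpa using hpow (s + 1) le_rfl (by omega)
  have hcrk : cseq k (s + 1) < k := hplt _ hrp
  rw [horb (s + 1) hrp.le, shift_kminus hx0 hxm hcrk, shift_kplus hxk hxm hcrk, hcr] at hR3
  obtain ⟨h31, h32, h33⟩ := hR3
  have hA1 : 1 ≤ 2 ^ s := Nat.one_le_two_pow
  have hklb : 2 ^ (s + 1) ≤ k := by rw [pow_succ]; omega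
  have hkub : k < 2 ^ (s + 2) := by
    have e : (2:ℕ) ^ (s + 2) = 2 ^ s * 4 := by rw [pow_succ, pow_succ]; ring
    omega
  have hlog : Nat.log 2 k = s + 1 := Nat.log_eq_of_pow_le_of_lt_pow hklb hkub
  set K := k ^ 2 / 2 ^ (s + 3) with hKdef
  have h8 : (2:ℕ) ^ (s + 3) = 8 * 2 ^ s := by rw [pow_succ, pow_succ, pow_succ]; ring
  have hKlt : K < k - 2 ^ s := by
    have key := R3_key (km := 2 ^ s) (kp := k - 2 ^ s) h32 h33
    rw [show 2 ^ s + (k - 2 ^ s) = k by omega] at key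
    rw [hKdef, Nat.div_lt_iff_lt_mul (by positivity)]
    calc k ^ 2 < (k - 2 ^ s) * (8 * 2 ^ s) := key
    _ = (k - 2 ^ s) * 2 ^ (s + 3) := by rw [h8]
  have hK1 : 1 ≤ K := by
    rw [hKdef, Nat.le_div_iff_mul_le (by positivity), one_mul, h8]
    have hlbk : 2 * 2 ^ s + 1 ≤ k := by omega
    nlinarith [Nat.mul_le_mul hlbk hlbk, Nat.mul_le_mul hA1 (le_refl ((2:ℕ) ^ s))]
  have hKub2 : K < 2 ^ (s + 1) := by
    rw [hKdef, Nat.div_lt_iff_lt_mul (by positivity)]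
    calc k ^ 2 < (2 ^ (s + 2)) ^ 2 := Nat.pow_lt_pow_left hkub (by norm_num)
    _ = 2 ^ (s + 1) * 2 ^ (s + 3) := by
        rw [← pow_mul, ← pow_add]; congr 1; omega
  have hcr1 : cseq k (s + 2) = k - K := by
    rw [show s + 2 = (s + 1) + 1 from rfl, cseq_succ_eq, hcr]
    have hLv : Lfun (2 ^ s) (k - 2 ^ s) = (k - 2 ^ s) - k ^ 2 / 2 ^ (s + 3) := by
      unfold Lfun
      rw [if_neg (by omega), if_neg (by omega), if_pos (by omega)]
      congr 1
      rw [show 2 ^ s + (k - 2 ^ s) = k by omega, ← h8]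
    rw [hLv, ← hKdef]
    omega
  -- region R4 chain
  have hchain : ∀ j, s + 2 + j ≤ p → k - cseq k (s + 2 + j) = K / 2 ^ j := by
    intro j
    induction j with
    | zero =>
      intro _
      rw [show s + 2 + 0 = s + 2 from rfl, hcr1, pow_zero, Nat.div_one]
      omega
    | succ j ih =>
      intro hle
      have hqp : s + 2 + j < p := by omega
      have ihv := ih (by omega)
      have hcqk := hplt _ hqp
      have hR4q := hR4 (s + 2 + j) (by omega) (by omega)
      rw [horb _ hqp.le, shift_kminus hx0 hxm hcqk, shift_kplus hxk hxm hcqk] at hR4q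
      rw [show s + 2 + (j + 1) = (s + 2 + j) + 1 from rfl, cseq_succ_eq]
      have hLv : Lfun (cseq k (s + 2 + j)) (k - cseq k (s + 2 + j))
          = ((k - cseq k (s + 2 + j)) + 1) / 2 := by
        unfold Lfun
        rw [if_neg (by omega), if_neg (by omega), if_neg (by omega)]
      rw [hLv]
      have hb2 : K / 2 ^ (j + 1) = K / 2 ^ j / 2 := by
        rw [pow_succ, ← Nat.div_div_eq_div_mul]
      omega
  have hps2 : s + 2 ≤ p := by omega
  have hp0 : K / 2 ^ (p - s - 2) = 0 := by
    have h := hchain (p - s - 2) (by omega)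
    rw [show s + 2 + (p - s - 2) = p by omega, hpmem] at h
    omega
  have hps3 : s + 3 ≤ p := by
    by_contra h
    rw [show p - s - 2 = 0 by omega, pow_zero, Nat.div_one] at hp0
    omega
  have hpm1 : 0 < K / 2 ^ (p - s - 3) := by
    have h := hchain (p - s - 3) (by omega)
    rw [show s + 2 + (p - s - 3) = p - 1 by omega] at h
    have := hplt (p - 1) (by omega)
    omega
  have hKlow : 2 ^ (p - s - 3) ≤ K := by
    have h := (Nat.le_div_iff_mul_le (show 0 < (2:ℕ) ^ (p - s - 3) by positivity)).1 hpm1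
    omega
  have hKhigh : K < 2 ^ (p - s - 2) := by
    by_contra h
    push_neg at h
    have := (Nat.le_div_iff_mul_le (show 0 < (2:ℕ) ^ (p - s - 2) by positivity)).2
      (by omega : 1 * 2 ^ (p - s - 2) ≤ K)
    omega
  have hg : p - s - 3 ≤ s := by
    by_contra h
    push_neg at h
    have := Nat.pow_le_pow_right (show 1 ≤ 2 by norm_num) (show s + 1 ≤ p - s - 3 by omega)
    omega
  set g := p - s - 3 with hgdef
  constructor
  · intro q hq hq2
    rw [hret] at hq2
    simp only [hret]
    have hjq : q = s + 2 + (q - s - 2) := by omega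
    set j := q - s - 2 with hjdef
    have hjg : j ≤ g := by omega
    have hkpq : kplus (Smap^[q] x) = K / 2 ^ j := by
      rw [horb q (by omega), shift_kplus hxk hxm (hplt q (by omega))]
      have h := hchain j (by omega)
      rw [← hjq] at h
      exact h
    rw [hkpq, show p - 1 - q = g - j by omega, show p - q - 1 = g - j by omega]
    have hMlb : 2 ^ (g - j) ≤ K / 2 ^ j := by
      rw [Nat.le_div_iff_mul_le (by positivity), ← pow_add, show g - j + j = g by omega]
      exact hKlow
    have hMub : K / 2 ^ j < 2 ^ (g - j + 1) := by
      rw [Nat.div_lt_iff_lt_mul (by positivity), ← pow_add]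
      exact lt_of_lt_of_le hKhigh (Nat.pow_le_pow_right (by norm_num) (by omega))
    rw [bits_sum hMlb hMub]
    congr 1
    apply Finset.sum_congr rfl
    intro i hi
    simp only [Finset.mem_range] at hi
    rw [hlog, show (2:ℕ) ^ (s + 1 + 2) = 2 ^ (s + 3) from rfl, ← hKdef,
      show q + i - (s + 1) - 1 = j + i by omega, pow_add, ← Nat.div_div_eq_div_mul]
  · rw [hret]
    omega
end
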